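/- arXiv:2408.01365 — 3 statements merged into one kernel-verified Lean document; each statement's English description precedes it below -/
import Mathlib

section
/- In the SAT construction: for any T ⊆ T₀ and any orders of epochs 1 and 2, for all 1 ≤ i ≤ n, if var(i) ∈ T then w_{x_i}^{(2)} ∈ U(1, 0.1), and otherwise w_{x_i}^{(2)} ∈ U(−1, 0.1). -/
open Classical

/-- Coordinate index set of `ℝ^N`, `N = n + 2m + 1`: coordinates `c₁, …, c_m`,
`x₁, …, xₙ`, `b₁, …, b_m`, and `dummy`. -/
abbrev SatIdx (n m : ℕ) := (Fin m ⊕ Fin n) ⊕ (Fin m ⊕ Unit)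

/-- A gadget of the training data `T₀`: either `var(i)` or `clause(γ, i₁, i₂, i₃)`. -/
abbrev Gadget (n m : ℕ) := Fin n ⊕ Fin m

/-- The coordinate `c_γ`. -/
def cIdx (n m : ℕ) (γ : Fin m) : SatIdx n m := Sum.inl (Sum.inl γ)

/-- The coordinate `x_i`. -/
def xIdx (n m : ℕ) (i : Fin n) : SatIdx n m := Sum.inl (Sum.inr i)

/-- The coordinate `b_γ`. -/
def bIdx (n m : ℕ) (γ : Fin m) : SatIdx n m := Sum.inr (Sum.inl γ)

/-- The coordinate `dummy`. -/
def dIdx (n m : ℕ) : SatIdx n m := Sum.inr (Sum.inr ())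

/-- `N = n + 2m + 1`. -/
def Nval (n m : ℕ) : ℕ := n + 2 * m + 1

/-- The derivative factor `g` of the loss function: `g(s) = -12N/5` on `U(-5, 0.01)`,
`g(s) = -1` on `U(-1/2, 0.26)`, `g(s) = -1/(1000N)` on `U(±1, 0.01) ∪ U(±3, 0.01)`,
and `g(s) = 0` otherwise. -/
noncomputable def gfun (n m : ℕ) (s : ℝ) : ℝ :=
  if |s - (-5)| < 0.01 then -(12 * (Nval n m : ℝ) / 5)
  else if |s - (-(1 : ℝ) / 2)| < 0.26 then -1
  else if |s - 1| < 0.01 ∨ |s - (-1)| < 0.01 ∨ |s - 3| < 0.01 ∨ |s - (-3)| < 0.01 then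
    -(1 / (1000 * (Nval n m : ℝ)))
  else 0

/-- The learning rates: `η_{c_γ} = 5`, `η_{x_i} = 1/(6N)`, `η_{b_γ} = 2000N`,
`η_dummy = 1`. -/
noncomputable def eta (n m : ℕ) : SatIdx n m → ℝ
  | Sum.inl (Sum.inl _) => 5
  | Sum.inl (Sum.inr _) => 1 / (6 * (Nval n m : ℝ))
  | Sum.inr (Sum.inl _) => 2000 * (Nval n m : ℝ)
  | Sum.inr (Sum.inr _) => 1

/-- The initial parameter: `w⁰_{c_γ} = 1/2`, `w⁰_{x_i} = -1`, `w⁰_{b_γ} = -1`,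
`w⁰_dummy = 1`. -/
noncomputable def winit (n m : ℕ) : SatIdx n m → ℝ
  | Sum.inl (Sum.inl _) => 1 / 2
  | Sum.inl (Sum.inr _) => -1
  | Sum.inr (Sum.inl _) => -1
  | Sum.inr (Sum.inr _) => 1

/-- Dot product on `ℝ^N`. -/
noncomputable def dotN (n m : ℕ) (w x : SatIdx n m → ℝ) : ℝ := ∑ j, w j * x j

/-- The input of the gadget `var(i)`: `x_{x_i} = 5`, all other coordinates `0`. -/
noncomputable def varX (n m : ℕ) (i : Fin n) : SatIdx n m → ℝ :=
  fun j => if j = xIdx n m i then 5 else 0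

/-- The input of the gadget `clause(γ, i₁, i₂, i₃)`: `x_{c_γ} = 1`,
`x_{x_{i₁}} = x_{x_{i₂}} = x_{x_{i₃}} = 1`, `x_{b_γ} = 1/2`, all other coordinates `0`. -/
noncomputable def clauseX (n m : ℕ) (γ : Fin m) (i₁ i₂ i₃ : Fin n) : SatIdx n m → ℝ :=
  fun j =>
    if j = cIdx n m γ then 1
    else if j = xIdx n m i₁ ∨ j = xIdx n m i₂ ∨ j = xIdx n m i₃ then 1
    else if j = bIdx n m γ then 1 / 2
    else 0

/-- The training sample `(x, y)` associated with a gadget (all labels are `1`). -/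
noncomputable def gadgetSample (n m : ℕ) (cl : Fin m → Fin n × Fin n × Fin n) :
    Gadget n m → (SatIdx n m → ℝ) × ℝ
  | Sum.inl i => (varX n m i, 1)
  | Sum.inr γ => (clauseX n m γ (cl γ).1 (cl γ).2.1 (cl γ).2.2, 1)

/-- Processing a training sample `(x, y)` at parameter `w` updates each coordinate by
`w_j ← w_j - η_j · g(y wᵀx) · y x_j`. -/
noncomputable def sgdStep (n m : ℕ) (cl : Fin m → Fin n × Fin n × Fin n)
    (w : SatIdx n m → ℝ) (gd : Gadget n m) : SatIdx n m → ℝ :=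
  fun j => w j - eta n m j *
    gfun n m ((gadgetSample n m cl gd).2 * dotN n m w (gadgetSample n m cl gd).1) *
    ((gadgetSample n m cl gd).2 * (gadgetSample n m cl gd).1 j)

/-- `runEpochs n m cl os e` is the parameter `w^{(e)}` at the end of epoch `e`, where
epoch `e ≥ 1` processes the samples in the order given by the list `os e`, starting from
the initial parameter `w⁰`. -/
noncomputable def runEpochs (n m : ℕ) (cl : Fin m → Fin n × Fin n × Fin n)
    (os : ℕ → List (Gadget n m)) : ℕ → SatIdx n m → ℝ
  | 0 => winit n m
  | e + 1 => (os (e + 1)).foldl (sgdStep n m cl) (runEpochs n m cl os e)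

/-- Each clause is given by a triple of pairwise distinct variable indices. -/
def ClauseDistinct (n m : ℕ) (cl : Fin m → Fin n × Fin n × Fin n) : Prop :=
  ∀ γ : Fin m, (cl γ).1 ≠ (cl γ).2.1 ∧ (cl γ).1 ≠ (cl γ).2.2 ∧ (cl γ).2.1 ≠ (cl γ).2.2

/-- Exactly one of three propositions holds. -/
def ExactlyOne (P Q R : Prop) : Prop :=
  (P ∧ ¬Q ∧ ¬R) ∨ (¬P ∧ Q ∧ ¬R) ∨ (¬P ∧ ¬Q ∧ R)

namespace Stmt15Aux

variable {n m : ℕ}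

lemma Nr_pos : (0:ℝ) < (Nval n m : ℝ) := by
  have : 0 < Nval n m := by simp [Nval]
  exact_mod_cast this

lemma Nr_ge_one : (1:ℝ) ≤ (Nval n m : ℝ) := by
  have : 1 ≤ Nval n m := by simp [Nval]
  exact_mod_cast this

lemma Nr_ge_m : (2*(m:ℝ)+1) ≤ (Nval n m : ℝ) := by
  have : 2*m+1 ≤ Nval n m := by simp [Nval]
  calc (2*(m:ℝ)+1) = ((2*m+1 : ℕ) : ℝ) := by push_cast; ring
  _ ≤ _ := by exact_mod_cast this

lemma countP_le (l : List (Gadget n m)) (hl : l.Nodup) :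
    l.countP (fun g => g.isRight) ≤ m := by
  have h1 : ∀ L : List (Gadget n m),
      L.countP (fun g => g.isRight) = (L.filterMap Sum.getRight?).length := by
    intro L
    induction L with
    | nil => simp
    | cons a t ih =>
      cases a <;> simp [List.countP_cons, List.filterMap_cons, Sum.getRight?, ih]
  have h2 : (l.filterMap Sum.getRight?).Nodup := by
    refine hl.filterMap ?_
    rintro (a|a) (b|b) c hc hc' <;> simp [Sum.getRight?] at hc hc' <;> subst hc <;> subst hc' <;> rfl
  have := h2.length_le_card
  simpa [h1 l] using this

lemma dot_varX (w : SatIdx n m → ℝ) (i : Fin n) :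
    dotN n m w (varX n m i) = 5 * w (xIdx n m i) := by
  unfold dotN varX
  simp only [mul_ite, mul_one, mul_zero, Finset.sum_ite_eq', Finset.mem_univ, if_true]
  ring

lemma clauseX_c (γ γ' : Fin m) (i₁ i₂ i₃ : Fin n) :
    clauseX n m γ i₁ i₂ i₃ (cIdx n m γ') = if γ' = γ then 1 else 0 := by
  simp [clauseX, cIdx, xIdx, bIdx]

lemma clauseX_x (γ : Fin m) (i₁ i₂ i₃ i' : Fin n) :
    clauseX n m γ i₁ i₂ i₃ (xIdx n m i') =
      if i' = i₁ ∨ i' = i₂ ∨ i' = i₃ then 1 else 0 := by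
  simp [clauseX, cIdx, xIdx, bIdx]

lemma clauseX_b (γ γ' : Fin m) (i₁ i₂ i₃ : Fin n) :
    clauseX n m γ i₁ i₂ i₃ (bIdx n m γ') = if γ' = γ then 1/2 else 0 := by
  simp [clauseX, cIdx, xIdx, bIdx]

lemma dot_clauseX (w : SatIdx n m → ℝ) (γ : Fin m) (i₁ i₂ i₃ : Fin n)
    (h12 : i₁ ≠ i₂) (h13 : i₁ ≠ i₃) (h23 : i₂ ≠ i₃) :
    dotN n m w (clauseX n m γ i₁ i₂ i₃) =
      w (cIdx n m γ) + (w (xIdx n m i₁) + w (xIdx n m i₂) + w (xIdx n m i₃))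
        + (1/2) * w (bIdx n m γ) := by
  have hpt : ∀ j, clauseX n m γ i₁ i₂ i₃ j =
      (if j = cIdx n m γ then 1 else 0)
      + ((if j = xIdx n m i₁ then 1 else 0) + (if j = xIdx n m i₂ then 1 else 0)
        + (if j = xIdx n m i₃ then 1 else 0))
      + (if j = bIdx n m γ then (1:ℝ)/2 else 0) := by
    rintro ((γ'|i')|(γ'|u))
    · simp [clauseX, cIdx, xIdx, bIdx]
    · simp only [clauseX, cIdx, xIdx, bIdx]
      by_cases h1 : i' = i₁ <;> by_cases h2 : i' = i₂ <;> by_cases h3 : i' = i₃ <;>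
        simp_all <;> norm_num
    · simp [clauseX, cIdx, xIdx, bIdx]
    · simp [clauseX, cIdx, xIdx, bIdx, dIdx]
  unfold dotN
  simp only [hpt, mul_add, Finset.sum_add_distrib, mul_ite, mul_one, mul_zero,
    Finset.sum_ite_eq', Finset.mem_univ, if_true]
  ring

end Stmt15Aux

namespace Stmt15Aux2
open Stmt15Aux

variable {n m : ℕ}

lemma gfun_flip (s : ℝ) (h1 : -5 ≤ s) (h2 : s < -4.99) :
    gfun n m s = -(12 * (Nval n m : ℝ) / 5) := by
  have hA : |s - (-5 : ℝ)| < 0.01 := by rw [abs_lt]; constructor <;> linarith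
  simp only [gfun, if_pos hA]

lemma gfun_tiny (s S : ℝ) (hS : S = 3 ∨ S = 1 ∨ S = -1 ∨ S = -3)
    (h0 : S ≤ s) (h1 : s < S + 0.01) :
    gfun n m s = -(1 / (1000 * (Nval n m : ℝ))) := by
  have hA : ¬ |s - (-5 : ℝ)| < 0.01 := by
    rw [abs_lt]; rintro ⟨u, v⟩; rcases hS with h|h|h|h <;> linarith
  have hB : ¬ |s - (-(1:ℝ) / 2)| < 0.26 := by
    rw [abs_lt]; rintro ⟨u, v⟩; rcases hS with h|h|h|h <;> linarith
  have hC : |s - 1| < 0.01 ∨ |s - (-1:ℝ)| < 0.01 ∨ |s - 3| < 0.01 ∨ |s - (-3:ℝ)| < 0.01 := by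
    rcases hS with h|h|h|h
    · exact Or.inr (Or.inr (Or.inl (by rw [abs_lt]; constructor <;> linarith)))
    · exact Or.inl (by rw [abs_lt]; constructor <;> linarith)
    · exact Or.inr (Or.inl (by rw [abs_lt]; constructor <;> linarith))
    · exact Or.inr (Or.inr (Or.inr (by rw [abs_lt]; constructor <;> linarith)))
  simp only [gfun, if_neg hA, if_neg hB, if_pos hC]

lemma gfun_big (s : ℝ) (h0 : -(1:ℝ)/2 < s) (h1 : s < -1/2 + 0.26) :
    gfun n m s = -1 := by
  have hA : ¬ |s - (-5 : ℝ)| < 0.01 := by rw [abs_lt]; rintro ⟨u, v⟩; linarith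
  have hB : |s - (-(1:ℝ) / 2)| < 0.26 := by rw [abs_lt]; constructor <;> linarith
  simp only [gfun, if_neg hA, if_pos hB]

lemma gfun_zero (s S : ℝ) (hS : S = 3 ∨ S = 1 ∨ S = -3)
    (h0 : S + 1/2 < s) (h1 : s < S + 1/2 + 0.26) :
    gfun n m s = 0 := by
  have hA : ¬ |s - (-5 : ℝ)| < 0.01 := by
    rw [abs_lt]; rintro ⟨u, v⟩; rcases hS with h|h|h <;> linarith
  have hB : ¬ |s - (-(1:ℝ) / 2)| < 0.26 := by
    rw [abs_lt]; rintro ⟨u, v⟩; rcases hS with h|h|h <;> linarith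
  have hC : ¬ (|s - 1| < 0.01 ∨ |s - (-1:ℝ)| < 0.01 ∨ |s - 3| < 0.01 ∨ |s - (-3:ℝ)| < 0.01) := by
    rintro (h|h|h|h) <;> rw [abs_lt] at h <;> obtain ⟨u, v⟩ := h <;>
      rcases hS with h|h|h <;> linarith
  simp only [gfun, if_neg hA, if_neg hB, if_neg hC]

lemma gfun_zero_ge5 (s : ℝ) (h : 5 ≤ s) : gfun n m s = 0 := by
  have hA : ¬ |s - (-5 : ℝ)| < 0.01 := by rw [abs_lt]; rintro ⟨u, v⟩; linarith
  have hB : ¬ |s - (-(1:ℝ) / 2)| < 0.26 := by rw [abs_lt]; rintro ⟨u, v⟩; linarith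
  have hC : ¬ (|s - 1| < 0.01 ∨ |s - (-1:ℝ)| < 0.01 ∨ |s - 3| < 0.01 ∨ |s - (-3:ℝ)| < 0.01) := by
    rintro (h|h|h|h) <;> rw [abs_lt] at h <;> obtain ⟨u, v⟩ := h <;> linarith
  simp only [gfun, if_neg hA, if_neg hB, if_neg hC]

lemma sgdStep_var (cl : Fin m → Fin n × Fin n × Fin n) (w : SatIdx n m → ℝ)
    (i : Fin n) (j : SatIdx n m) :
    sgdStep n m cl w (Sum.inl i) j =
      w j - eta n m j * gfun n m (dotN n m w (varX n m i)) * varX n m i j := by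
  simp [sgdStep, gadgetSample]

lemma sgdStep_clause (cl : Fin m → Fin n × Fin n × Fin n) (w : SatIdx n m → ℝ)
    (γ : Fin m) (j : SatIdx n m) :
    sgdStep n m cl w (Sum.inr γ) j =
      w j - eta n m j *
        gfun n m (dotN n m w (clauseX n m γ (cl γ).1 (cl γ).2.1 (cl γ).2.2)) *
        clauseX n m γ (cl γ).1 (cl γ).2.1 (cl γ).2.2 j := by
  simp [sgdStep, gadgetSample]

lemma eta_x (i : Fin n) : eta n m (xIdx n m i) = 1 / (6 * (Nval n m : ℝ)) := rfl
lemma eta_c (γ : Fin m) : eta n m (cIdx n m γ) = 5 := rfl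
lemma eta_b (γ : Fin m) : eta n m (bIdx n m γ) = 2000 * (Nval n m : ℝ) := rfl

lemma m_eps_le : (m:ℝ) * (1/(6000 * (Nval n m : ℝ)^2)) ≤ 1/12000 := by
  have hN := Nr_ge_m (n := n) (m := m)
  have hN1 := Nr_ge_one (n := n) (m := m)
  rw [mul_one_div, div_le_div_iff₀ (by positivity) (by norm_num)]
  nlinarith [sq_nonneg ((Nval n m : ℝ) - 1)]

lemma m_beta_le : (m:ℝ) * (1/(6 * (Nval n m : ℝ))) ≤ 1/12 := by
  have hN := Nr_ge_m (n := n) (m := m)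
  have hN1 := Nr_ge_one (n := n) (m := m)
  rw [mul_one_div, div_le_div_iff₀ (by positivity) (by norm_num)]
  nlinarith

end Stmt15Aux2

namespace Stmt15Aux3
open Stmt15Aux Stmt15Aux2

variable {n m : ℕ}

/-- `1` if `P` holds, `-1` otherwise. -/
noncomputable def aval (P : Prop) : ℝ := @ite _ P (Classical.propDecidable P) 1 (-1)

lemma aval_pos {P : Prop} (h : P) : aval P = 1 := by simp [aval, h]

lemma aval_neg {P : Prop} (h : ¬ P) : aval P = -1 := by simp [aval, h]

lemma aval_cases (P : Prop) : aval P = 1 ∨ aval P = -1 := by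
  by_cases h : P
  · exact Or.inl (aval_pos h)
  · exact Or.inr (aval_neg h)

lemma aval_congr {P Q : Prop} (h : P ↔ Q) : aval P = aval Q := by
  by_cases hp : P
  · rw [aval_pos hp, aval_pos (h.mp hp)]
  · rw [aval_neg hp, aval_neg (fun hq => hp (h.mpr hq))]

/-- Invariant during epoch 1: `k` clause gadgets processed so far, `R` remaining. -/
def Inv1 (T : Finset (Gadget n m)) (k : ℕ) (R : List (Gadget n m))
    (w : SatIdx n m → ℝ) : Prop :=
  (∀ i : Fin n, ∃ δ : ℝ, 0 ≤ δ ∧ δ ≤ k * (1/(6000 * (Nval n m : ℝ)^2)) ∧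
    w (xIdx n m i) = aval ((Sum.inl i : Gadget n m) ∈ T ∧ (Sum.inl i : Gadget n m) ∉ R) + δ) ∧
  (∀ γ : Fin m,
    ((Sum.inr γ : Gadget n m) ∈ R → w (cIdx n m γ) = 1/2 ∧ w (bIdx n m γ) = -1) ∧
    ((Sum.inr γ : Gadget n m) ∈ T ∧ (Sum.inr γ : Gadget n m) ∉ R →
      w (cIdx n m γ) = 1/2 + 1/(200 * (Nval n m : ℝ)) ∧ w (bIdx n m γ) = 0))

/-- Invariant during epoch 2. -/
def Inv2 (T : Finset (Gadget n m)) (k : ℕ) (R : List (Gadget n m))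
    (w : SatIdx n m → ℝ) : Prop :=
  (∀ i : Fin n, ∃ δ : ℝ,
    0 ≤ δ ∧ δ ≤ m * (1/(6000 * (Nval n m : ℝ)^2)) + k * (1/(6 * (Nval n m : ℝ))) ∧
    w (xIdx n m i) = aval ((Sum.inl i : Gadget n m) ∈ T) + δ) ∧
  (∀ γ : Fin m, (Sum.inr γ : Gadget n m) ∈ R →
    w (cIdx n m γ) = 1/2 + 1/(200 * (Nval n m : ℝ)) ∧ w (bIdx n m γ) = 0)

lemma step1_var (cl : Fin m → Fin n × Fin n × Fin n) (T : Finset (Gadget n m))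
    (k : ℕ) (i : Fin n) (R : List (Gadget n m)) (w : SatIdx n m → ℝ)
    (hiT : Sum.inl i ∈ T) (hiR : Sum.inl i ∉ R) (hk : k ≤ m)
    (h : Inv1 T k (Sum.inl i :: R) w) :
    Inv1 T k R (sgdStep n m cl w (Sum.inl i)) := by
  obtain ⟨hx, hcb⟩ := h
  have hNpos := Nr_pos (n := n) (m := m)
  have hme := m_eps_le (n := n) (m := m)
  have hke : (k:ℝ) * (1/(6000 * (Nval n m : ℝ)^2)) ≤ 1/12000 := by
    refine le_trans ?_ hme
    have : (k:ℝ) ≤ m := by exact_mod_cast hk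
    exact mul_le_mul_of_nonneg_right this (by positivity)
  obtain ⟨δ, hδ0, hδk, hδe⟩ := hx i
  have hmem : (Sum.inl i : Gadget n m) ∈ (Sum.inl i :: R) := List.mem_cons_self
  rw [aval_neg (by simp : ¬((Sum.inl i : Gadget n m) ∈ T ∧ (Sum.inl i : Gadget n m) ∉ (Sum.inl i :: R)))] at hδe
  have hδs : δ ≤ 1/12000 := le_trans hδk hke
  -- the dot product and gfun value
  have hdot : dotN n m w (varX n m i) = -5 + 5*δ := by
    rw [dot_varX, hδe]; ring
  have hg : gfun n m (dotN n m w (varX n m i)) = -(12 * (Nval n m : ℝ) / 5) := by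
    rw [hdot]; exact gfun_flip _ (by linarith) (by linarith)
  constructor
  · intro i'
    by_cases hii : i = i'
    · subst hii
      refine ⟨δ, hδ0, hδk, ?_⟩
      rw [sgdStep_var, hg, eta_x, aval_pos ⟨hiT, hiR⟩]
      have h5 : varX n m i (xIdx n m i) = 5 := by simp [varX]
      rw [h5, hδe]
      field_simp
      ring
    · obtain ⟨δ', h0', hk', he'⟩ := hx i'
      refine ⟨δ', h0', hk', ?_⟩
      rw [sgdStep_var, hg]
      have h0 : varX n m i (xIdx n m i') = 0 := by
        simp [varX, xIdx, Ne.symm hii]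
      rw [h0, mul_zero, sub_zero, he']
      have hmm : (Sum.inl i' : Gadget n m) ∈ (Sum.inl i :: R) ↔ (Sum.inl i' : Gadget n m) ∈ R := by
        simp [List.mem_cons, Ne.symm hii]
      rw [aval_congr (by rw [hmm])]
  · intro γ
    have hc0 : varX n m i (cIdx n m γ) = 0 := by simp [varX, xIdx, cIdx]
    have hb0 : varX n m i (bIdx n m γ) = 0 := by simp [varX, xIdx, bIdx]
    have hmemγ : (Sum.inr γ : Gadget n m) ∈ (Sum.inl i :: R) ↔ (Sum.inr γ : Gadget n m) ∈ R := by
      simp [List.mem_cons]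
    constructor
    · intro hγR
      rw [sgdStep_var, sgdStep_var, hc0, hb0, mul_zero, mul_zero, sub_zero, sub_zero]
      exact (hcb γ).1 (hmemγ.mpr hγR)
    · intro hγ
      rw [sgdStep_var, sgdStep_var, hc0, hb0, mul_zero, mul_zero, sub_zero, sub_zero]
      exact (hcb γ).2 ⟨hγ.1, fun hh => hγ.2 (hmemγ.mp hh)⟩

end Stmt15Aux3

namespace Stmt15Aux3
open Stmt15Aux Stmt15Aux2

variable {n m : ℕ}

lemma step1_clause (cl : Fin m → Fin n × Fin n × Fin n) (hcl : ClauseDistinct n m cl)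
    (T : Finset (Gadget n m)) (k : ℕ) (γ : Fin m) (R : List (Gadget n m))
    (w : SatIdx n m → ℝ)
    (hγT : (Sum.inr γ : Gadget n m) ∈ T) (hγR : (Sum.inr γ : Gadget n m) ∉ R)
    (hk : k + 1 ≤ m)
    (h : Inv1 T k (Sum.inr γ :: R) w) :
    Inv1 T (k+1) R (sgdStep n m cl w (Sum.inr γ)) := by
  obtain ⟨hx, hcb⟩ := h
  have hNpos := Nr_pos (n := n) (m := m)
  have hme := m_eps_le (n := n) (m := m)
  have hkm : (k:ℝ) ≤ (m:ℝ) - 1 := by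
    have : (k:ℝ) + 1 ≤ m := by exact_mod_cast hk
    linarith
  have hke : (k:ℝ) * (1/(6000 * (Nval n m : ℝ)^2)) ≤ 1/12000 := by
    refine le_trans ?_ hme
    exact mul_le_mul_of_nonneg_right (by linarith) (by positivity)
  obtain ⟨d1, hd10, hd1k, hd1e⟩ := hx (cl γ).1
  obtain ⟨d2, hd20, hd2k, hd2e⟩ := hx (cl γ).2.1
  obtain ⟨d3, hd30, hd3k, hd3e⟩ := hx (cl γ).2.2
  obtain ⟨h12, h13, h23⟩ := hcl γ
  have hγmem : (Sum.inr γ : Gadget n m) ∈ (Sum.inr γ :: R) := List.mem_cons_self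
  obtain ⟨hc, hb⟩ := (hcb γ).1 hγmem
  set a1 := aval ((Sum.inl (cl γ).1 : Gadget n m) ∈ T ∧
    (Sum.inl (cl γ).1 : Gadget n m) ∉ (Sum.inr γ :: R)) with ha1def
  set a2 := aval ((Sum.inl (cl γ).2.1 : Gadget n m) ∈ T ∧
    (Sum.inl (cl γ).2.1 : Gadget n m) ∉ (Sum.inr γ :: R)) with ha2def
  set a3 := aval ((Sum.inl (cl γ).2.2 : Gadget n m) ∈ T ∧
    (Sum.inl (cl γ).2.2 : Gadget n m) ∉ (Sum.inr γ :: R)) with ha3def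
  have hS : a1 + a2 + a3 = 3 ∨ a1 + a2 + a3 = 1 ∨ a1 + a2 + a3 = -1 ∨ a1 + a2 + a3 = -3 := by
    rcases aval_cases ((Sum.inl (cl γ).1 : Gadget n m) ∈ T ∧
        (Sum.inl (cl γ).1 : Gadget n m) ∉ (Sum.inr γ :: R)) with h1|h1 <;>
      rcases aval_cases ((Sum.inl (cl γ).2.1 : Gadget n m) ∈ T ∧
        (Sum.inl (cl γ).2.1 : Gadget n m) ∉ (Sum.inr γ :: R)) with h2|h2 <;>
      rcases aval_cases ((Sum.inl (cl γ).2.2 : Gadget n m) ∈ T ∧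
        (Sum.inl (cl γ).2.2 : Gadget n m) ∉ (Sum.inr γ :: R)) with h3|h3 <;>
      rw [← ha1def] at h1 <;> rw [← ha2def] at h2 <;> rw [← ha3def] at h3 <;>
      rw [h1, h2, h3] <;> norm_num
  have hd1s : d1 ≤ 1/12000 := le_trans hd1k hke
  have hd2s : d2 ≤ 1/12000 := le_trans hd2k hke
  have hd3s : d3 ≤ 1/12000 := le_trans hd3k hke
  have hdot : dotN n m w (clauseX n m γ (cl γ).1 (cl γ).2.1 (cl γ).2.2) =
      (a1 + a2 + a3) + (d1 + d2 + d3) := by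
    rw [dot_clauseX _ _ _ _ _ h12 h13 h23, hc, hb, hd1e, hd2e, hd3e]
    ring
  have hg : gfun n m (dotN n m w (clauseX n m γ (cl γ).1 (cl γ).2.1 (cl γ).2.2)) =
      -(1 / (1000 * (Nval n m : ℝ))) := by
    rw [hdot]
    exact gfun_tiny _ _ hS (by linarith) (by rcases hS with h|h|h|h <;> rw [h] <;> linarith)
  have heps : (1 / (6 * (Nval n m : ℝ))) * (-(1 / (1000 * (Nval n m : ℝ)))) * 1 =
      -(1/(6000 * (Nval n m : ℝ)^2)) := by
    field_simp
    ring
  constructor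
  · intro i'
    obtain ⟨δ', h0', hk', he'⟩ := hx i'
    have hmm : aval ((Sum.inl i' : Gadget n m) ∈ T ∧ (Sum.inl i' : Gadget n m) ∉ (Sum.inr γ :: R))
        = aval ((Sum.inl i' : Gadget n m) ∈ T ∧ (Sum.inl i' : Gadget n m) ∉ R) := by
      exact aval_congr (by simp [List.mem_cons])
    rw [sgdStep_clause, hg, eta_x, clauseX_x]
    by_cases hm3 : i' = (cl γ).1 ∨ i' = (cl γ).2.1 ∨ i' = (cl γ).2.2
    · refine ⟨δ' + 1/(6000 * (Nval n m : ℝ)^2), by positivity, ?_, ?_⟩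
      · push_cast
        have : (0:ℝ) < 1/(6000 * (Nval n m : ℝ)^2) := by positivity
        nlinarith
      · rw [if_pos hm3, heps, he', hmm]
        ring
    · refine ⟨δ', h0', ?_, ?_⟩
      · refine le_trans hk' ?_
        have : (0:ℝ) ≤ 1/(6000 * (Nval n m : ℝ)^2) := by positivity
        push_cast
        nlinarith
      · rw [if_neg hm3, mul_zero, sub_zero, he', hmm]
  · intro γ'
    by_cases hγγ : γ' = γ
    · subst hγγ
      constructor
      · intro hmem; exact absurd hmem hγR
      · intro _
        constructor
        · rw [sgdStep_clause, hg, eta_c, clauseX_c, if_pos rfl, hc]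
          have hc2 : (5:ℝ) * (-(1 / (1000 * (Nval n m : ℝ)))) * 1
              = -(1/(200 * (Nval n m : ℝ))) := by
            have hN0 : (Nval n m : ℝ) ≠ 0 := ne_of_gt hNpos
            field_simp
            ring
          rw [hc2]
          ring
        · rw [sgdStep_clause, hg, eta_b, clauseX_b, if_pos rfl, hb]
          have hb2 : 2000 * (Nval n m : ℝ) * (-(1 / (1000 * (Nval n m : ℝ)))) * (1/2 : ℝ)
              = -1 := by
            have hN0 : (Nval n m : ℝ) ≠ 0 := ne_of_gt hNpos
            field_simp
            ring
          rw [hb2]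
          norm_num
    · have hcc : clauseX n m γ (cl γ).1 (cl γ).2.1 (cl γ).2.2 (cIdx n m γ') = 0 := by
        rw [clauseX_c, if_neg hγγ]
      have hbb : clauseX n m γ (cl γ).1 (cl γ).2.1 (cl γ).2.2 (bIdx n m γ') = 0 := by
        rw [clauseX_b, if_neg hγγ]
      have hmemγ : (Sum.inr γ' : Gadget n m) ∈ (Sum.inr γ :: R) ↔
          (Sum.inr γ' : Gadget n m) ∈ R := by
        simp [List.mem_cons, hγγ]
      constructor
      · intro hγ'R
        rw [sgdStep_clause, sgdStep_clause, hcc, hbb, mul_zero, mul_zero, sub_zero, sub_zero]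
        exact (hcb γ').1 (hmemγ.mpr hγ'R)
      · intro hγ'
        rw [sgdStep_clause, sgdStep_clause, hcc, hbb, mul_zero, mul_zero, sub_zero, sub_zero]
        exact (hcb γ').2 ⟨hγ'.1, fun hh => hγ'.2 (hmemγ.mp hh)⟩

end Stmt15Aux3

namespace Stmt15Aux3
open Stmt15Aux Stmt15Aux2

variable {n m : ℕ}

lemma fold1 (cl : Fin m → Fin n × Fin n × Fin n) (hcl : ClauseDistinct n m cl)
    (T : Finset (Gadget n m)) :
    ∀ (R : List (Gadget n m)) (k : ℕ) (w : SatIdx n m → ℝ), R.Nodup →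
      (∀ g ∈ R, g ∈ T) → k + R.countP (fun g => g.isRight) ≤ m → Inv1 T k R w →
      Inv1 T m [] (R.foldl (sgdStep n m cl) w) := by
  intro R
  induction R with
  | nil =>
    intro k w _ _ hk h
    simp only [List.foldl_nil]
    obtain ⟨hx, hcb⟩ := h
    refine ⟨fun i => ?_, hcb⟩
    obtain ⟨δ, h0, hkk, he⟩ := hx i
    refine ⟨δ, h0, le_trans hkk ?_, he⟩
    have hkm : (k:ℝ) ≤ m := by
      have : k ≤ m := by simpa using hk
      exact_mod_cast this
    exact mul_le_mul_of_nonneg_right hkm (by positivity)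
  | cons g R ih =>
    intro k w hnd hsub hk h
    obtain ⟨hgR, hndR⟩ := List.nodup_cons.mp hnd
    simp only [List.foldl_cons]
    cases g with
    | inl i =>
      have hk' : k + R.countP (fun g => g.isRight) ≤ m := by
        simpa [List.countP_cons] using hk
      exact ih k _ hndR (fun g hg => hsub g (List.mem_cons_of_mem _ hg)) hk'
        (step1_var cl T k i R w (hsub _ (List.mem_cons_self)) hgR (by omega) h)
    | inr γ =>
      have hk' : (k + 1) + R.countP (fun g => g.isRight) ≤ m := by
        have := hk
        simp [List.countP_cons] at this
        omega
      exact ih (k+1) _ hndR (fun g hg => hsub g (List.mem_cons_of_mem _ hg)) hk'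
        (step1_clause cl hcl T k γ R w (hsub _ (List.mem_cons_self)) hgR (by omega) h)

lemma step2_var (cl : Fin m → Fin n × Fin n × Fin n) (T : Finset (Gadget n m))
    (k : ℕ) (i : Fin n) (R : List (Gadget n m)) (w : SatIdx n m → ℝ)
    (hiT : (Sum.inl i : Gadget n m) ∈ T)
    (h : Inv2 T k (Sum.inl i :: R) w) :
    Inv2 T k R (sgdStep n m cl w (Sum.inl i)) := by
  obtain ⟨hx, hcb⟩ := h
  obtain ⟨δ, h0, hk, he⟩ := hx i
  rw [aval_pos hiT] at he
  have hdot : dotN n m w (varX n m i) = 5 + 5*δ := by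
    rw [dot_varX, he]; ring
  have hg : gfun n m (dotN n m w (varX n m i)) = 0 := by
    rw [hdot]; exact gfun_zero_ge5 _ (by linarith)
  have hstep : ∀ j, sgdStep n m cl w (Sum.inl i) j = w j := by
    intro j; rw [sgdStep_var, hg]; ring
  refine ⟨fun i' => ?_, fun γ hγ => ?_⟩
  · obtain ⟨δ', h0', hk', he'⟩ := hx i'
    exact ⟨δ', h0', hk', by rw [hstep]; exact he'⟩
  · rw [hstep, hstep]
    exact hcb γ (List.mem_cons_of_mem _ hγ)

lemma step2_clause (cl : Fin m → Fin n × Fin n × Fin n) (hcl : ClauseDistinct n m cl)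
    (T : Finset (Gadget n m)) (k : ℕ) (γ : Fin m) (R : List (Gadget n m))
    (w : SatIdx n m → ℝ)
    (hγR : (Sum.inr γ : Gadget n m) ∉ R) (hk : k + 1 ≤ m)
    (h : Inv2 T k (Sum.inr γ :: R) w) :
    Inv2 T (k+1) R (sgdStep n m cl w (Sum.inr γ)) := by
  obtain ⟨hx, hcb⟩ := h
  have hNpos := Nr_pos (n := n) (m := m)
  have hme := m_eps_le (n := n) (m := m)
  have hm1 : 1 ≤ m := by
    rcases Nat.eq_zero_or_pos m with h0 | h1
    · exact absurd (h0 ▸ γ).isLt (by omega)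
    · exact h1
  have hN3 : (3:ℝ) ≤ (Nval n m : ℝ) := by
    have := Nr_ge_m (n := n) (m := m)
    have : (1:ℝ) ≤ (m:ℝ) := by exact_mod_cast hm1
    have := Nr_ge_m (n := n) (m := m)
    linarith
  have hkm : (k:ℝ) + 1 ≤ (m:ℝ) := by exact_mod_cast hk
  obtain ⟨d1, hd10, hd1k, hd1e⟩ := hx (cl γ).1
  obtain ⟨d2, hd20, hd2k, hd2e⟩ := hx (cl γ).2.1
  obtain ⟨d3, hd30, hd3k, hd3e⟩ := hx (cl γ).2.2
  obtain ⟨h12, h13, h23⟩ := hcl γ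
  obtain ⟨hc, hb⟩ := hcb γ (List.mem_cons_self)
  set a1 := aval ((Sum.inl (cl γ).1 : Gadget n m) ∈ T) with ha1def
  set a2 := aval ((Sum.inl (cl γ).2.1 : Gadget n m) ∈ T) with ha2def
  set a3 := aval ((Sum.inl (cl γ).2.2 : Gadget n m) ∈ T) with ha3def
  have hS : a1 + a2 + a3 = 3 ∨ a1 + a2 + a3 = 1 ∨ a1 + a2 + a3 = -1 ∨ a1 + a2 + a3 = -3 := by
    rcases aval_cases ((Sum.inl (cl γ).1 : Gadget n m) ∈ T) with h1|h1 <;>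
      rcases aval_cases ((Sum.inl (cl γ).2.1 : Gadget n m) ∈ T) with h2|h2 <;>
      rcases aval_cases ((Sum.inl (cl γ).2.2 : Gadget n m) ∈ T) with h3|h3 <;>
      rw [← ha1def] at h1 <;> rw [← ha2def] at h2 <;> rw [← ha3def] at h3 <;>
      rw [h1, h2, h3] <;> norm_num
  -- numeric bound on the perturbation
  have he200 : (0:ℝ) < 1/(200 * (Nval n m : ℝ)) := by positivity
  have he200' : 1/(200 * (Nval n m : ℝ)) ≤ 1/600 := by
    apply one_div_le_one_div_of_le <;> linarith
  have hkb : (k:ℝ) * (1/(6 * (Nval n m : ℝ))) ≤ 1/12 := by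
    rw [mul_one_div, div_le_iff₀ (by positivity)]
    nlinarith [Nr_ge_m (n := n) (m := m)]
  have hdbound : ∀ d : ℝ, d ≤ (m:ℝ) * (1/(6000 * (Nval n m : ℝ)^2))
      + k * (1/(6 * (Nval n m : ℝ))) → d ≤ 1/12000 + 1/12 := fun d hd =>
    le_trans hd (by linarith)
  have hd1s := hdbound d1 hd1k
  have hd2s := hdbound d2 hd2k
  have hd3s := hdbound d3 hd3k
  have hEub : 1/(200 * (Nval n m : ℝ)) + (d1 + d2 + d3) < 0.26 := by
    -- d_i ≤ mε + kβ, 3(mε + kβ) ≤ 3/12000 + 1/4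
    have h1 : d1 + d2 + d3 ≤ 3 * ((m:ℝ) * (1/(6000 * (Nval n m : ℝ)^2))
        + k * (1/(6 * (Nval n m : ℝ)))) := by linarith
    have h2 : 3 * ((k:ℝ) * (1/(6 * (Nval n m : ℝ)))) ≤ 1/4 := by linarith
    linarith
  set dott := dotN n m w (clauseX n m γ (cl γ).1 (cl γ).2.1 (cl γ).2.2) with hdtdef
  have hdot : dott = (a1 + a2 + a3) + (1/2 + 1/(200 * (Nval n m : ℝ)) + (d1 + d2 + d3)) := by
    rw [hdtdef, dot_clauseX _ _ _ _ _ h12 h13 h23, hc, hb, hd1e, hd2e, hd3e]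
    ring
  have hgval : gfun n m dott = -1 ∨ gfun n m dott = 0 := by
    have hE0 : (0:ℝ) < 1/(200 * (Nval n m : ℝ)) + (d1 + d2 + d3) := by linarith
    rcases hS with h|h|h|h
    · refine Or.inr (gfun_zero _ 3 (by norm_num) ?_ ?_) <;> rw [hdot, h] <;> linarith
    · refine Or.inr (gfun_zero _ 1 (by norm_num) ?_ ?_) <;> rw [hdot, h] <;> linarith
    · refine Or.inl (gfun_big _ ?_ ?_) <;> rw [hdot, h] <;> linarith
    · refine Or.inr (gfun_zero _ (-3) (by norm_num) ?_ ?_) <;> rw [hdot, h] <;> linarith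
  obtain ⟨G, hG, hG1, hG0⟩ : ∃ G : ℝ, gfun n m dott = G ∧ -1 ≤ G ∧ G ≤ 0 := by
    rcases hgval with h|h
    · exact ⟨-1, h, by norm_num, by norm_num⟩
    · exact ⟨0, h, by norm_num, by norm_num⟩
  refine ⟨fun i' => ?_, fun γ' hγ' => ?_⟩
  · obtain ⟨δ', h0', hk', he'⟩ := hx i'
    rw [sgdStep_clause, ← hdtdef, eta_x, clauseX_x, hG]
    by_cases hm3 : i' = (cl γ).1 ∨ i' = (cl γ).2.1 ∨ i' = (cl γ).2.2
    · rw [if_pos hm3]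
      have hc0 : (0:ℝ) < 1 / (6 * (Nval n m : ℝ)) := by positivity
      have hcg : 1 / (6 * (Nval n m : ℝ)) * G ≤ 0 :=
        mul_nonpos_of_nonneg_of_nonpos (le_of_lt hc0) hG0
      have hcg' : 1 / (6 * (Nval n m : ℝ)) * (-G) ≤ 1 / (6 * (Nval n m : ℝ)) * 1 :=
        mul_le_mul_of_nonneg_left (by linarith) (le_of_lt hc0)
      refine ⟨δ' - 1 / (6 * (Nval n m : ℝ)) * G * 1, ?_, ?_, ?_⟩
      · linarith only [h0', hcg]
      · push_cast
        linarith only [hk', hcg']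
      · rw [he']; ring
    · rw [if_neg hm3]
      refine ⟨δ', h0', ?_, by rw [mul_zero, sub_zero]; exact he'⟩
      refine le_trans hk' ?_
      have hpos : (0:ℝ) ≤ 1/(6 * (Nval n m : ℝ)) := by positivity
      push_cast
      linarith only [hpos]
  · have hγγ : γ' ≠ γ := fun hh => hγR (hh ▸ hγ')
    have hcc : clauseX n m γ (cl γ).1 (cl γ).2.1 (cl γ).2.2 (cIdx n m γ') = 0 := by
      rw [clauseX_c, if_neg hγγ]
    have hbb : clauseX n m γ (cl γ).1 (cl γ).2.1 (cl γ).2.2 (bIdx n m γ') = 0 := by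
      rw [clauseX_b, if_neg hγγ]
    rw [sgdStep_clause, sgdStep_clause, hcc, hbb, mul_zero, mul_zero, sub_zero, sub_zero]
    exact hcb γ' (List.mem_cons_of_mem _ hγ')

lemma fold2 (cl : Fin m → Fin n × Fin n × Fin n) (hcl : ClauseDistinct n m cl)
    (T : Finset (Gadget n m)) :
    ∀ (R : List (Gadget n m)) (k : ℕ) (w : SatIdx n m → ℝ), R.Nodup →
      (∀ g ∈ R, g ∈ T) → k + R.countP (fun g => g.isRight) ≤ m → Inv2 T k R w →
      Inv2 T m [] (R.foldl (sgdStep n m cl) w) := by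
  intro R
  induction R with
  | nil =>
    intro k w _ _ hk h
    simp only [List.foldl_nil]
    obtain ⟨hx, hcb⟩ := h
    refine ⟨fun i => ?_, hcb⟩
    obtain ⟨δ, h0, hkk, he⟩ := hx i
    refine ⟨δ, h0, le_trans hkk ?_, he⟩
    have hkm : (k:ℝ) ≤ m := by
      have : k ≤ m := by simpa using hk
      exact_mod_cast this
    have : (k:ℝ) * (1/(6 * (Nval n m : ℝ))) ≤ (m:ℝ) * (1/(6 * (Nval n m : ℝ))) :=
      mul_le_mul_of_nonneg_right hkm (by positivity)
    linarith
  | cons g R ih =>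
    intro k w hnd hsub hk h
    obtain ⟨hgR, hndR⟩ := List.nodup_cons.mp hnd
    simp only [List.foldl_cons]
    cases g with
    | inl i =>
      have hk' : k + R.countP (fun g => g.isRight) ≤ m := by
        simpa [List.countP_cons] using hk
      exact ih k _ hndR (fun g hg => hsub g (List.mem_cons_of_mem _ hg)) hk'
        (step2_var cl T k i R w (hsub _ (List.mem_cons_self)) h)
    | inr γ =>
      have hk' : (k + 1) + R.countP (fun g => g.isRight) ≤ m := by
        have := hk
        simp [List.countP_cons] at this
        omega
      exact ih (k+1) _ hndR (fun g hg => hsub g (List.mem_cons_of_mem _ hg)) hk'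
        (step2_clause cl hcl T k γ R w hgR (by omega) h)

end Stmt15Aux3

open Stmt15Aux Stmt15Aux2 Stmt15Aux3 in
/-- In the SAT construction: for any `T ⊆ T₀` and any orders of epochs 1 and 2, for all
`1 ≤ i ≤ n`: if `var(i) ∈ T` then `w_{x_i}^{(2)} ∈ U(1, 0.1)`, otherwise
`w_{x_i}^{(2)} ∈ U(-1, 0.1)`. -/
theorem stmt15 (n m : ℕ) (cl : Fin m → Fin n × Fin n × Fin n)
    (hcl : ClauseDistinct n m cl)
    (T : Finset (Gadget n m)) (os : ℕ → List (Gadget n m))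
    (hos : ∀ e, 1 ≤ e → List.Perm (os e) T.toList)
    (i : Fin n) :
    (Sum.inl i ∈ T → |runEpochs n m cl os 2 (xIdx n m i) - 1| < 0.1) ∧
    (Sum.inl i ∉ T → |runEpochs n m cl os 2 (xIdx n m i) - (-1)| < 0.1) := by
  have hrun : runEpochs n m cl os 2 =
      (os 2).foldl (sgdStep n m cl) ((os 1).foldl (sgdStep n m cl) (winit n m)) := by
    show runEpochs n m cl os (0 + 1 + 1) = _
    rw [runEpochs, runEpochs, runEpochs]
  have perm1 := hos 1 (by norm_num)
  have perm2 := hos 2 (by norm_num)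
  have hTnodup : T.toList.Nodup := Finset.nodup_toList T
  have hnd1 : (os 1).Nodup := (perm1.nodup_iff).mpr hTnodup
  have hnd2 : (os 2).Nodup := (perm2.nodup_iff).mpr hTnodup
  have hsub1 : ∀ g ∈ os 1, g ∈ T := fun g hg =>
    (Finset.mem_toList).mp (perm1.mem_iff.mp hg)
  have hsub2 : ∀ g ∈ os 2, g ∈ T := fun g hg =>
    (Finset.mem_toList).mp (perm2.mem_iff.mp hg)
  have hcT : T.toList.countP (fun g => g.isRight) ≤ m := countP_le T.toList hTnodup
  have hc1 : (os 1).countP (fun g => g.isRight) ≤ m :=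
    le_trans (le_of_eq (perm1.countP_eq _)) hcT
  have hc2 : (os 2).countP (fun g => g.isRight) ≤ m :=
    le_trans (le_of_eq (perm2.countP_eq _)) hcT
  have hInv1 : Inv1 T 0 (os 1) (winit n m) := by
    constructor
    · intro i'
      refine ⟨0, le_refl 0, by norm_num, ?_⟩
      have hnc : ¬((Sum.inl i' : Gadget n m) ∈ T ∧ (Sum.inl i' : Gadget n m) ∉ os 1) := by
        rintro ⟨h1, h2⟩
        exact h2 (perm1.mem_iff.mpr (Finset.mem_toList.mpr h1))
      rw [aval_neg hnc]
      show (-1 : ℝ) = -1 + 0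
      norm_num
    · intro γ
      refine ⟨fun _ => ⟨rfl, rfl⟩, fun hγ => ?_⟩
      exact absurd (perm1.mem_iff.mpr (Finset.mem_toList.mpr hγ.1)) hγ.2
  have hw1 := fold1 cl hcl T (os 1) 0 (winit n m) hnd1 hsub1 (by simpa using hc1) hInv1
  set w1 := (os 1).foldl (sgdStep n m cl) (winit n m) with hw1def
  have hInv2 : Inv2 T 0 (os 2) w1 := by
    obtain ⟨hx1, hcb1⟩ := hw1
    constructor
    · intro i'
      obtain ⟨δ, h0, hk, he⟩ := hx1 i'
      refine ⟨δ, h0, ?_, ?_⟩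
      · push_cast
        linarith
      · rw [he, aval_congr (show ((Sum.inl i' : Gadget n m) ∈ T ∧
          (Sum.inl i' : Gadget n m) ∉ ([] : List (Gadget n m))) ↔
          (Sum.inl i' : Gadget n m) ∈ T by simp)]
    · intro γ hγ
      exact (hcb1 γ).2 ⟨hsub2 _ hγ, by simp⟩
  have hw2 := fold2 cl hcl T (os 2) 0 w1 hnd2 hsub2 (by simpa using hc2) hInv2
  obtain ⟨δ, h0, hk, he⟩ := hw2.1 i
  have hme := m_eps_le (n := n) (m := m)
  have hmb := m_beta_le (n := n) (m := m)
  have hsmall : δ < 0.1 := by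
    have : (1:ℝ)/12000 + 1/12 < 0.1 := by norm_num
    linarith
  have hrw : runEpochs n m cl os 2 (xIdx n m i) =
      aval ((Sum.inl i : Gadget n m) ∈ T) + δ := by
    rw [hrun]; exact he
  constructor
  · intro hiT
    rw [hrw, aval_pos hiT]
    have : (1:ℝ) + δ - 1 = δ := by ring
    rw [this, abs_of_nonneg h0]
    exact hsmall
  · intro hiT
    rw [hrw, aval_neg hiT]
    have : (-1:ℝ) + δ - (-1) = δ := by ring
    rw [this, abs_of_nonneg h0]
    exact hsmall
end

section
/- In the SAT construction: for any T ⊆ T₀ and any orders of epochs 1 and 2, every training sample (x,y) ∈ T satisfies g(y·(w^{(2)})ᵀx) = 0; consequently, running a third epoch on T in any order leaves the parameter unchanged, i.e. w^{(3)} = w^{(2)}, so w^{(2)} is a fixpoint of the training process. -/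
open Classical

namespace Stmt17

variable {n m : ℕ}

lemma Npos (n m : ℕ) : (1:ℝ) ≤ (Nval n m : ℝ) := by
  have : 1 ≤ Nval n m := by unfold Nval; omega
  exact_mod_cast this

lemma Nne (n m : ℕ) : (Nval n m : ℝ) ≠ 0 := by
  have := Npos n m; linarith

lemma mleN (n m : ℕ) : (m:ℝ) ≤ (Nval n m : ℝ) := by
  have : m ≤ Nval n m := by unfold Nval; omega
  exact_mod_cast this

/-! ### gfun evaluation lemmas -/

lemma gfun_big {s : ℝ} (h1 : -5.01 < s) (h2 : s < -4.99) :
    gfun n m s = -(12 * (Nval n m : ℝ) / 5) := by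
  unfold gfun
  rw [if_pos]
  rw [abs_lt]; constructor <;> [nlinarith; nlinarith]

lemma gfun_one {s : ℝ} (h1 : -0.76 < s) (h2 : s < -0.24) :
    gfun n m s = -1 := by
  unfold gfun
  rw [if_neg, if_pos]
  · rw [abs_lt]; constructor <;> nlinarith
  · rw [abs_lt]; push_neg; intro h; nlinarith

lemma gfun_small {s : ℝ} (h : (-3.01 < s ∧ s < -2.99) ∨ (-1.01 < s ∧ s < -0.99)
    ∨ (0.99 < s ∧ s < 1.01) ∨ (2.99 < s ∧ s < 3.01)) :
    gfun n m s = -(1 / (1000 * (Nval n m : ℝ))) := by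
  unfold gfun
  rw [if_neg, if_neg, if_pos]
  · rcases h with ⟨h1,h2⟩|⟨h1,h2⟩|⟨h1,h2⟩|⟨h1,h2⟩
    · right; right; right; rw [abs_lt]; constructor <;> nlinarith
    · right; left; rw [abs_lt]; constructor <;> nlinarith
    · left; rw [abs_lt]; constructor <;> nlinarith
    · right; right; left; rw [abs_lt]; constructor <;> nlinarith
  · rw [abs_lt]; push_neg; intro h1
    rcases h with ⟨a,b⟩|⟨a,b⟩|⟨a,b⟩|⟨a,b⟩ <;> nlinarith
  · rw [abs_lt]; push_neg; intro h1
    rcases h with ⟨a,b⟩|⟨a,b⟩|⟨a,b⟩|⟨a,b⟩ <;> nlinarith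

lemma gfun_zero {s : ℝ} (h : (3.01 ≤ s) ∨ (-2.99 ≤ s ∧ s ≤ -1.01) ∨ (1.01 ≤ s ∧ s ≤ 2.99)) :
    gfun n m s = 0 := by
  unfold gfun
  rw [if_neg, if_neg, if_neg]
  · rintro (h1|h1|h1|h1) <;> rw [abs_lt] at h1 <;>
      rcases h with a|⟨a,b⟩|⟨a,b⟩ <;> nlinarith [h1.1, h1.2]
  · rw [abs_lt]; push_neg; intro h1
    rcases h with a|⟨a,b⟩|⟨a,b⟩ <;> nlinarith
  · rw [abs_lt]; push_neg; intro h1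
    rcases h with a|⟨a,b⟩|⟨a,b⟩ <;> nlinarith

end Stmt17
namespace Stmt17
section
variable {n m : ℕ}

/-! ### coordinate evaluations -/

lemma varX_x (i i' : Fin n) :
    varX n m i (xIdx n m i') = if i' = i then 5 else 0 := by
  rcases eq_or_ne i' i with h|h <;> simp [varX, xIdx, h]

lemma varX_c (i : Fin n) (γ : Fin m) : varX n m i (cIdx n m γ) = 0 := by
  simp [varX, xIdx, cIdx]

lemma varX_b (i : Fin n) (γ : Fin m) : varX n m i (bIdx n m γ) = 0 := by
  simp [varX, xIdx, bIdx]

lemma varX_d (i : Fin n) : varX n m i (dIdx n m) = 0 := by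
  simp [varX, xIdx, dIdx]

variable (γ : Fin m) (i₁ i₂ i₃ : Fin n)

lemma clauseX_c (γ' : Fin m) :
    clauseX n m γ i₁ i₂ i₃ (cIdx n m γ') = if γ' = γ then 1 else 0 := by
  rcases eq_or_ne γ' γ with h|h <;> simp [clauseX, cIdx, xIdx, bIdx, h]

lemma clauseX_x (i : Fin n) :
    clauseX n m γ i₁ i₂ i₃ (xIdx n m i) = if i = i₁ ∨ i = i₂ ∨ i = i₃ then 1 else 0 := by
  by_cases h : i = i₁ ∨ i = i₂ ∨ i = i₃ <;> simp [clauseX, cIdx, xIdx, bIdx, h]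

lemma clauseX_b (γ' : Fin m) :
    clauseX n m γ i₁ i₂ i₃ (bIdx n m γ') = if γ' = γ then 1/2 else 0 := by
  rcases eq_or_ne γ' γ with h|h <;> simp [clauseX, cIdx, xIdx, bIdx, h]

lemma clauseX_d : clauseX n m γ i₁ i₂ i₃ (dIdx n m) = 0 := by
  simp [clauseX, cIdx, xIdx, bIdx, dIdx]

/-! ### dot products -/

lemma sum_single (w : SatIdx n m → ℝ) (a : SatIdx n m) (v : ℝ) :
    ∑ j, w j * (if j = a then v else 0) = w a * v := by
  rw [Finset.sum_eq_single a]
  · simp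
  · intro b _ hb; simp [hb]
  · intro h; simp at h

lemma dot_varX (w : SatIdx n m → ℝ) (i : Fin n) :
    dotN n m w (varX n m i) = w (xIdx n m i) * 5 := by
  unfold dotN varX
  exact sum_single w _ 5

lemma dot_clauseX (w : SatIdx n m → ℝ) (h12 : i₁ ≠ i₂) (h13 : i₁ ≠ i₃) (h23 : i₂ ≠ i₃) :
    dotN n m w (clauseX n m γ i₁ i₂ i₃) =
      w (cIdx n m γ) + (w (xIdx n m i₁) + w (xIdx n m i₂) + w (xIdx n m i₃))
        + w (bIdx n m γ) * (1/2) := by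
  have hfun : ∀ j, clauseX n m γ i₁ i₂ i₃ j =
      (if j = cIdx n m γ then 1 else 0) + ((if j = xIdx n m i₁ then 1 else 0)
        + (if j = xIdx n m i₂ then 1 else 0) + (if j = xIdx n m i₃ then 1 else 0))
        + (if j = bIdx n m γ then (1:ℝ)/2 else 0) := by
    intro j
    unfold clauseX
    split_ifs with h1 h2 h3 <;>
      simp_all [cIdx, xIdx, bIdx]
  unfold dotN
  calc ∑ j, w j * clauseX n m γ i₁ i₂ i₃ j
      = ∑ j, (w j * (if j = cIdx n m γ then 1 else 0)
        + ((w j * (if j = xIdx n m i₁ then 1 else 0))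
        + (w j * (if j = xIdx n m i₂ then 1 else 0))
        + (w j * (if j = xIdx n m i₃ then 1 else 0)))
        + w j * (if j = bIdx n m γ then (1:ℝ)/2 else 0)) := by
        apply Finset.sum_congr rfl; intro j _; rw [hfun j]; ring
    _ = _ := by
        rw [Finset.sum_add_distrib, Finset.sum_add_distrib, Finset.sum_add_distrib,
          Finset.sum_add_distrib, sum_single, sum_single, sum_single, sum_single, sum_single]
        ring

end
end Stmt17
namespace Stmt17
section
variable {n m : ℕ} (cl : Fin m → Fin n × Fin n × Fin n) (T : Finset (Gadget n m))

/-- `i` occurs in clause `γ`. -/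
def memT (i : Fin n) (γ : Fin m) : Prop :=
  i = (cl γ).1 ∨ i = (cl γ).2.1 ∨ i = (cl γ).2.2

/-- number of clauses of `S` containing `i` (as a real). -/
noncomputable def degR (S : Finset (Gadget n m)) (i : Fin n) : ℝ :=
  ∑ γ : Fin m, if (Sum.inr γ : Gadget n m) ∈ S ∧ memT cl i γ then 1 else 0

/-- number of true literals of clause `γ` (w.r.t. the assignment given by `T`). -/
noncomputable def kk (γ : Fin m) : ℝ :=
  (if (Sum.inl (cl γ).1 : Gadget n m) ∈ T then 1 else 0)
  + (if (Sum.inl (cl γ).2.1 : Gadget n m) ∈ T then 1 else 0)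
  + (if (Sum.inl (cl γ).2.2 : Gadget n m) ∈ T then 1 else 0)

/-- number of clauses of `S` containing `i` with exactly one true literal. -/
noncomputable def eR (S : Finset (Gadget n m)) (i : Fin n) : ℝ :=
  ∑ γ : Fin m, if (Sum.inr γ : Gadget n m) ∈ S ∧ memT cl i γ ∧ kk cl T γ = 1 then 1 else 0

lemma degR_nonneg (S : Finset (Gadget n m)) (i : Fin n) : 0 ≤ degR cl S i :=
  Finset.sum_nonneg fun γ _ => by positivity

lemma degR_le (S : Finset (Gadget n m)) (i : Fin n) : degR cl S i ≤ m := by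
  have : degR cl S i ≤ ∑ _γ : Fin m, (1:ℝ) :=
    Finset.sum_le_sum fun γ _ => by split <;> norm_num
  simpa using this

lemma eR_nonneg (S : Finset (Gadget n m)) (i : Fin n) : 0 ≤ eR cl T S i :=
  Finset.sum_nonneg fun γ _ => by positivity

lemma eR_le (S : Finset (Gadget n m)) (i : Fin n) : eR cl T S i ≤ m := by
  have : eR cl T S i ≤ ∑ _γ : Fin m, (1:ℝ) :=
    Finset.sum_le_sum fun γ _ => by split <;> norm_num
  simpa using this

lemma degR_empty (i : Fin n) : degR cl (∅ : Finset (Gadget n m)) i = 0 := by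
  unfold degR; simp

lemma eR_empty (i : Fin n) : eR cl T (∅ : Finset (Gadget n m)) i = 0 := by
  unfold eR; simp

lemma degR_insert_var (S : Finset (Gadget n m)) (i i₀ : Fin n) :
    degR cl (insert (Sum.inl i₀) S) i = degR cl S i := by
  unfold degR
  apply Finset.sum_congr rfl
  intro γ _
  simp [Finset.mem_insert]

lemma eR_insert_var (S : Finset (Gadget n m)) (i i₀ : Fin n) :
    eR cl T (insert (Sum.inl i₀) S) i = eR cl T S i := by
  unfold eR
  apply Finset.sum_congr rfl
  intro γ _
  simp [Finset.mem_insert]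

lemma degR_insert_clause (S : Finset (Gadget n m)) (i : Fin n) (γ₀ : Fin m)
    (h : (Sum.inr γ₀ : Gadget n m) ∉ S) :
    degR cl (insert (Sum.inr γ₀) S) i = degR cl S i + (if memT cl i γ₀ then 1 else 0) := by
  unfold degR
  have key : ∀ γ : Fin m,
      (if (Sum.inr γ : Gadget n m) ∈ insert (Sum.inr γ₀) S ∧ memT cl i γ then (1:ℝ) else 0)
      = (if (Sum.inr γ : Gadget n m) ∈ S ∧ memT cl i γ then 1 else 0)
        + (if γ = γ₀ then (if memT cl i γ₀ then (1:ℝ) else 0) else 0) := by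
    intro γ
    rcases eq_or_ne γ γ₀ with h'|h'
    · subst h'; simp [h]
    · have : (Sum.inr γ : Gadget n m) ≠ Sum.inr γ₀ := by simp [h']
      simp [Finset.mem_insert, this, h']
  rw [Finset.sum_congr rfl (fun γ _ => key γ), Finset.sum_add_distrib,
    Finset.sum_ite_eq' Finset.univ γ₀ (fun _ => if memT cl i γ₀ then (1:ℝ) else 0)]
  simp

lemma eR_insert_clause (S : Finset (Gadget n m)) (i : Fin n) (γ₀ : Fin m)
    (h : (Sum.inr γ₀ : Gadget n m) ∉ S) :
    eR cl T (insert (Sum.inr γ₀) S) i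
      = eR cl T S i + (if memT cl i γ₀ ∧ kk cl T γ₀ = 1 then 1 else 0) := by
  unfold eR
  have key : ∀ γ : Fin m,
      (if (Sum.inr γ : Gadget n m) ∈ insert (Sum.inr γ₀) S ∧ memT cl i γ ∧ kk cl T γ = 1
        then (1:ℝ) else 0)
      = (if (Sum.inr γ : Gadget n m) ∈ S ∧ memT cl i γ ∧ kk cl T γ = 1 then 1 else 0)
        + (if γ = γ₀ then (if memT cl i γ₀ ∧ kk cl T γ₀ = 1 then (1:ℝ) else 0) else 0) := by
    intro γ
    rcases eq_or_ne γ γ₀ with h'|h'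
    · subst h'; by_cases hm : memT cl i γ ∧ kk cl T γ = 1 <;> simp [h, hm]
    · have : (Sum.inr γ : Gadget n m) ≠ Sum.inr γ₀ := by simp [h']
      simp [Finset.mem_insert, this, h']
  rw [Finset.sum_congr rfl (fun γ _ => key γ), Finset.sum_add_distrib,
    Finset.sum_ite_eq' Finset.univ γ₀
      (fun _ => if memT cl i γ₀ ∧ kk cl T γ₀ = 1 then (1:ℝ) else 0)]
  simp
end
end Stmt17
namespace Stmt17
section
variable {n m : ℕ} (cl : Fin m → Fin n × Fin n × Fin n) (T : Finset (Gadget n m))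

lemma sample_snd (gd : Gadget n m) : (gadgetSample n m cl gd).2 = 1 := by
  cases gd <;> rfl

lemma sample_fst_var (i : Fin n) :
    (gadgetSample n m cl (Sum.inl i)).1 = varX n m i := rfl

lemma sample_fst_clause (γ : Fin m) :
    (gadgetSample n m cl (Sum.inr γ)).1
      = clauseX n m γ (cl γ).1 (cl γ).2.1 (cl γ).2.2 := rfl

lemma sgdStep_eq (w : SatIdx n m → ℝ) (gd : Gadget n m) (j : SatIdx n m) :
    sgdStep n m cl w gd j = w j - eta n m j *
      gfun n m ((gadgetSample n m cl gd).2 * dotN n m w (gadgetSample n m cl gd).1) *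
      ((gadgetSample n m cl gd).2 * (gadgetSample n m cl gd).1 j) := rfl

lemma eta_c (γ : Fin m) : eta n m (cIdx n m γ) = 5 := rfl
lemma eta_x (i : Fin n) : eta n m (xIdx n m i) = 1 / (6 * (Nval n m : ℝ)) := rfl
lemma eta_b (γ : Fin m) : eta n m (bIdx n m γ) = 2000 * (Nval n m : ℝ) := rfl
lemma eta_d : eta n m (dIdx n m) = 1 := rfl

lemma degD_bounds (S : Finset (Gadget n m)) (i : Fin n) :
    0 ≤ degR cl S i / (6000*(Nval n m : ℝ)^2)
    ∧ degR cl S i / (6000*(Nval n m : ℝ)^2) ≤ 1/6000 := by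
  have h0 := degR_nonneg cl S i
  have h1 := degR_le cl S i
  have hm := mleN n m
  have hN := Npos n m
  constructor
  · positivity
  · rw [div_le_iff₀ (by positivity)]
    nlinarith

lemma cterm_bounds : 0 ≤ 1/(200*(Nval n m : ℝ)) ∧ 1/(200*(Nval n m : ℝ)) ≤ 1/200 := by
  have hN := Npos n m
  constructor
  · positivity
  · rw [div_le_div_iff₀ (by positivity) (by norm_num)]
    nlinarith

lemma eE_bounds (S : Finset (Gadget n m)) (i : Fin n) :
    0 ≤ eR cl T S i / (6*(Nval n m : ℝ))
    ∧ eR cl T S i / (6*(Nval n m : ℝ)) ≤ 1/12 := by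
  have h0 := eR_nonneg cl T S i
  have h1 := eR_le cl T S i
  have hN := Npos n m
  have h2m : 2*(m:ℝ) + 1 ≤ (Nval n m : ℝ) := by
    have : 2*m + 1 ≤ Nval n m := by unfold Nval; omega
    exact_mod_cast this
  constructor
  · positivity
  · rw [div_le_div_iff₀ (by positivity) (by norm_num)]
    nlinarith

end
end Stmt17
namespace Stmt17
section
variable {n m : ℕ} (cl : Fin m → Fin n × Fin n × Fin n) (T : Finset (Gadget n m))

/-- Invariant during epoch 1, `S` = set of processed gadgets. -/
def W1 (S : Finset (Gadget n m)) (w : SatIdx n m → ℝ) : Prop :=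
  (∀ γ, w (cIdx n m γ) = 1/2
      + (if (Sum.inr γ : Gadget n m) ∈ S then 1/(200*(Nval n m : ℝ)) else 0))
  ∧ (∀ γ, w (bIdx n m γ) = -1 + (if (Sum.inr γ : Gadget n m) ∈ S then 1 else 0))
  ∧ (∀ i, w (xIdx n m i) = (if (Sum.inl i : Gadget n m) ∈ S then 1 else -1)
      + degR cl S i / (6000*(Nval n m : ℝ)^2))
  ∧ w (dIdx n m) = 1

/-- Invariant during epoch 2, `S` = set of processed gadgets (a subset of `T`). -/
def W2 (S : Finset (Gadget n m)) (w : SatIdx n m → ℝ) : Prop :=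
  (∀ γ, w (cIdx n m γ) = 1/2
      + (if (Sum.inr γ : Gadget n m) ∈ T then 1/(200*(Nval n m : ℝ)) else 0)
      + (if (Sum.inr γ : Gadget n m) ∈ S ∧ kk cl T γ = 1 then 5 else 0))
  ∧ (∀ γ, w (bIdx n m γ) = -1 + (if (Sum.inr γ : Gadget n m) ∈ T then 1 else 0)
      + (if (Sum.inr γ : Gadget n m) ∈ S ∧ kk cl T γ = 1 then 1000*(Nval n m : ℝ) else 0))
  ∧ (∀ i, w (xIdx n m i) = (if (Sum.inl i : Gadget n m) ∈ T then 1 else -1)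
      + degR cl T i / (6000*(Nval n m : ℝ)^2) + eR cl T S i / (6*(Nval n m : ℝ)))
  ∧ w (dIdx n m) = 1

lemma W1_init : W1 cl (∅ : Finset (Gadget n m)) (winit n m) := by
  refine ⟨fun γ => ?_, fun γ => ?_, fun i => ?_, ?_⟩ <;>
    simp [winit, cIdx, bIdx, xIdx, dIdx, degR_empty]

lemma W1_to_W2 (w : SatIdx n m → ℝ) (h : W1 cl T w) : W2 cl T (∅ : Finset (Gadget n m)) w := by
  obtain ⟨hc, hb, hx, hd⟩ := h
  refine ⟨fun γ => ?_, fun γ => ?_, fun i => ?_, hd⟩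
  · rw [hc γ]; simp
  · rw [hb γ]; simp
  · rw [hx i]; simp [eR_empty]

lemma step1 (hcl : ClauseDistinct n m cl) (S : Finset (Gadget n m)) (w : SatIdx n m → ℝ)
    (gd : Gadget n m) (hgd : gd ∉ S) (hW : W1 cl S w) :
    W1 cl (insert gd S) (sgdStep n m cl w gd) := by
  obtain ⟨hc, hb, hx, hd⟩ := hW
  have hN1 := Npos n m
  have hNne := Nne n m
  cases gd with
  | inl i =>
    have hxi := hx i
    rw [if_neg hgd] at hxi
    obtain ⟨hD0, hD1⟩ := degD_bounds cl S i
    have hg : gfun n m ((gadgetSample n m cl (Sum.inl i)).2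
        * dotN n m w (gadgetSample n m cl (Sum.inl i)).1)
        = -(12 * (Nval n m : ℝ) / 5) := by
      rw [sample_snd, one_mul, sample_fst_var, dot_varX, hxi]
      apply gfun_big <;> nlinarith
    refine ⟨fun γ => ?_, fun γ => ?_, fun i' => ?_, ?_⟩
    · rw [sgdStep_eq, hg, sample_snd, sample_fst_var, varX_c, hc γ]
      simp [Finset.mem_insert]
    · rw [sgdStep_eq, hg, sample_snd, sample_fst_var, varX_b, hb γ]
      simp [Finset.mem_insert]
    · rw [sgdStep_eq, hg, sample_snd, sample_fst_var, varX_x, eta_x, degR_insert_var]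
      rcases eq_or_ne i' i with h'|h'
      · subst h'
        rw [if_pos rfl, if_pos (Finset.mem_insert_self _ _), hxi]
        field_simp
        ring
      · rw [if_neg h', hx i']
        have hmem : ((Sum.inl i' : Gadget n m) ∈ insert (Sum.inl i) S)
            ↔ (Sum.inl i' : Gadget n m) ∈ S := by simp [h']
        rw [if_congr hmem rfl rfl]
        ring
    · rw [sgdStep_eq, hg, sample_snd, sample_fst_var, varX_d, hd]
      ring
  | inr γ =>
    obtain ⟨h12, h13, h23⟩ := hcl γ
    have hcγ := hc γ
    rw [if_neg hgd] at hcγ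
    have hbγ := hb γ
    rw [if_neg hgd] at hbγ
    obtain ⟨ha0, ha1⟩ := degD_bounds cl S (cl γ).1
    obtain ⟨hb0, hb1⟩ := degD_bounds cl S (cl γ).2.1
    obtain ⟨hc0, hc1⟩ := degD_bounds cl S (cl γ).2.2
    have hg : gfun n m ((gadgetSample n m cl (Sum.inr γ)).2
        * dotN n m w (gadgetSample n m cl (Sum.inr γ)).1)
        = -(1 / (1000 * (Nval n m : ℝ))) := by
      rw [sample_snd, one_mul, sample_fst_clause,
        dot_clauseX γ (cl γ).1 (cl γ).2.1 (cl γ).2.2 w h12 h13 h23,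
        hcγ, hbγ, hx (cl γ).1, hx (cl γ).2.1, hx (cl γ).2.2]
      apply gfun_small
      by_cases t1 : (Sum.inl (cl γ).1 : Gadget n m) ∈ S <;>
        by_cases t2 : (Sum.inl (cl γ).2.1 : Gadget n m) ∈ S <;>
          by_cases t3 : (Sum.inl (cl γ).2.2 : Gadget n m) ∈ S
      · rw [if_pos t1, if_pos t2, if_pos t3]
        right; right; right; constructor <;> linarith
      · rw [if_pos t1, if_pos t2, if_neg t3]
        right; right; left; constructor <;> linarith
      · rw [if_pos t1, if_neg t2, if_pos t3]
        right; right; left; constructor <;> linarith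
      · rw [if_pos t1, if_neg t2, if_neg t3]
        right; left; constructor <;> linarith
      · rw [if_neg t1, if_pos t2, if_pos t3]
        right; right; left; constructor <;> linarith
      · rw [if_neg t1, if_pos t2, if_neg t3]
        right; left; constructor <;> linarith
      · rw [if_neg t1, if_neg t2, if_pos t3]
        right; left; constructor <;> linarith
      · rw [if_neg t1, if_neg t2, if_neg t3]
        left; constructor <;> linarith
    refine ⟨fun γ' => ?_, fun γ' => ?_, fun i' => ?_, ?_⟩
    · rw [sgdStep_eq, hg, sample_snd, sample_fst_clause, clauseX_c, eta_c]
      rcases eq_or_ne γ' γ with h'|h'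
      · subst h'
        rw [if_pos rfl, hcγ, if_pos (Finset.mem_insert_self _ _)]
        field_simp
        ring
      · rw [if_neg h', hc γ']
        have hmem : ((Sum.inr γ' : Gadget n m) ∈ insert (Sum.inr γ) S)
            ↔ (Sum.inr γ' : Gadget n m) ∈ S := by simp [h']
        rw [if_congr hmem rfl rfl]
        ring
    · rw [sgdStep_eq, hg, sample_snd, sample_fst_clause, clauseX_b, eta_b]
      rcases eq_or_ne γ' γ with h'|h'
      · subst h'
        rw [if_pos rfl, hbγ, if_pos (Finset.mem_insert_self _ _)]
        field_simp
        ring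
      · rw [if_neg h', hb γ']
        have hmem : ((Sum.inr γ' : Gadget n m) ∈ insert (Sum.inr γ) S)
            ↔ (Sum.inr γ' : Gadget n m) ∈ S := by simp [h']
        rw [if_congr hmem rfl rfl]
        ring
    · rw [sgdStep_eq, hg, sample_snd, sample_fst_clause, clauseX_x, eta_x,
        degR_insert_clause cl S i' γ hgd, hx i']
      have hmem : ((Sum.inl i' : Gadget n m) ∈ insert (Sum.inr γ) S)
          ↔ (Sum.inl i' : Gadget n m) ∈ S := by simp
      rw [if_congr hmem rfl rfl]
      by_cases hm : memT cl i' γ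
      · have hm' : i' = (cl γ).1 ∨ i' = (cl γ).2.1 ∨ i' = (cl γ).2.2 := hm
        rw [if_pos hm, if_pos hm']
        field_simp
        ring
      · have hm' : ¬(i' = (cl γ).1 ∨ i' = (cl γ).2.1 ∨ i' = (cl γ).2.2) := hm
        rw [if_neg hm, if_neg hm']
        ring
    · rw [sgdStep_eq, hg, sample_snd, sample_fst_clause, clauseX_d, hd]
      ring
end
end Stmt17
namespace Stmt17
section
variable {n m : ℕ} (cl : Fin m → Fin n × Fin n × Fin n) (T : Finset (Gadget n m))

lemma var_g_eval (S : Finset (Gadget n m)) (w : SatIdx n m → ℝ) (i : Fin n)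
    (hiT : (Sum.inl i : Gadget n m) ∈ T) (hW : W2 cl T S w) :
    gfun n m ((gadgetSample n m cl (Sum.inl i)).2
      * dotN n m w (gadgetSample n m cl (Sum.inl i)).1) = 0 := by
  obtain ⟨hc, hb, hx, hd⟩ := hW
  have hxi := hx i
  rw [if_pos hiT] at hxi
  obtain ⟨hD0, hD1⟩ := degD_bounds cl T i
  obtain ⟨hE0, hE1⟩ := eE_bounds cl T S i
  rw [sample_snd, one_mul, sample_fst_var, dot_varX, hxi]
  apply gfun_zero
  left; nlinarith

lemma clause_g_eval (hcl : ClauseDistinct n m cl) (S : Finset (Gadget n m))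
    (w : SatIdx n m → ℝ) (γ : Fin m)
    (hγT : (Sum.inr γ : Gadget n m) ∈ T)
    (hno : ¬((Sum.inr γ : Gadget n m) ∈ S ∧ kk cl T γ = 1)) (hW : W2 cl T S w) :
    gfun n m ((gadgetSample n m cl (Sum.inr γ)).2
      * dotN n m w (gadgetSample n m cl (Sum.inr γ)).1)
      = if kk cl T γ = 1 then -1 else 0 := by
  obtain ⟨h12, h13, h23⟩ := hcl γ
  obtain ⟨hc, hb, hx, hd⟩ := hW
  have hN1 := Npos n m
  have hcγ := hc γ
  rw [if_pos hγT, if_neg hno] at hcγ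
  have hbγ := hb γ
  rw [if_pos hγT, if_neg hno] at hbγ
  obtain ⟨ha0, ha1⟩ := degD_bounds cl T (cl γ).1
  obtain ⟨hb0, hb1⟩ := degD_bounds cl T (cl γ).2.1
  obtain ⟨hc0, hc1⟩ := degD_bounds cl T (cl γ).2.2
  obtain ⟨he0, he1⟩ := eE_bounds cl T S (cl γ).1
  obtain ⟨hf0, hf1⟩ := eE_bounds cl T S (cl γ).2.1
  obtain ⟨hg0, hg1⟩ := eE_bounds cl T S (cl γ).2.2
  obtain ⟨hq0, hq1⟩ := cterm_bounds (n := n) (m := m)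
  rw [sample_snd, one_mul, sample_fst_clause,
    dot_clauseX γ (cl γ).1 (cl γ).2.1 (cl γ).2.2 w h12 h13 h23,
    hcγ, hbγ, hx (cl γ).1, hx (cl γ).2.1, hx (cl γ).2.2]
  by_cases t1 : (Sum.inl (cl γ).1 : Gadget n m) ∈ T <;>
    by_cases t2 : (Sum.inl (cl γ).2.1 : Gadget n m) ∈ T <;>
      by_cases t3 : (Sum.inl (cl γ).2.2 : Gadget n m) ∈ T
  · rw [if_pos t1, if_pos t2, if_pos t3,
      if_neg (by simp [kk, t1, t2, t3] : ¬ kk cl T γ = 1)]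
    apply gfun_zero; left; linarith
  · rw [if_pos t1, if_pos t2, if_neg t3,
      if_neg (by simp [kk, t1, t2, t3] : ¬ kk cl T γ = 1)]
    apply gfun_zero; right; right; constructor <;> linarith
  · rw [if_pos t1, if_neg t2, if_pos t3,
      if_neg (by simp [kk, t1, t2, t3] : ¬ kk cl T γ = 1)]
    apply gfun_zero; right; right; constructor <;> linarith
  · rw [if_pos t1, if_neg t2, if_neg t3,
      if_pos (by simp [kk, t1, t2, t3] : kk cl T γ = 1)]
    apply gfun_one <;> linarith
  · rw [if_neg t1, if_pos t2, if_pos t3,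
      if_neg (by simp [kk, t1, t2, t3] : ¬ kk cl T γ = 1)]
    apply gfun_zero; right; right; constructor <;> linarith
  · rw [if_neg t1, if_pos t2, if_neg t3,
      if_pos (by simp [kk, t1, t2, t3] : kk cl T γ = 1)]
    apply gfun_one <;> linarith
  · rw [if_neg t1, if_neg t2, if_pos t3,
      if_pos (by simp [kk, t1, t2, t3] : kk cl T γ = 1)]
    apply gfun_one <;> linarith
  · rw [if_neg t1, if_neg t2, if_neg t3,
      if_neg (by simp [kk, t1, t2, t3] : ¬ kk cl T γ = 1)]
    apply gfun_zero; right; left; constructor <;> linarith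
end
end Stmt17
namespace Stmt17
section
variable {n m : ℕ} (cl : Fin m → Fin n × Fin n × Fin n) (T : Finset (Gadget n m))

lemma step2 (hcl : ClauseDistinct n m cl) (S : Finset (Gadget n m)) (w : SatIdx n m → ℝ)
    (gd : Gadget n m) (hgdT : gd ∈ T) (hgd : gd ∉ S) (hW : W2 cl T S w) :
    W2 cl T (insert gd S) (sgdStep n m cl w gd) := by
  have hN1 := Npos n m
  have hNne := Nne n m
  cases gd with
  | inl i =>
    have hg := var_g_eval cl T S w i hgdT hW
    obtain ⟨hc, hb, hx, hd⟩ := hW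
    have hstep : ∀ j, sgdStep n m cl w (Sum.inl i) j = w j := by
      intro j; rw [sgdStep_eq, hg]; ring
    refine ⟨fun γ => ?_, fun γ => ?_, fun i' => ?_, ?_⟩
    · rw [hstep, hc γ]
      have hmem : ((Sum.inr γ : Gadget n m) ∈ insert (Sum.inl i) S ∧ kk cl T γ = 1)
          ↔ ((Sum.inr γ : Gadget n m) ∈ S ∧ kk cl T γ = 1) := by
        simp [Finset.mem_insert]
      rw [if_congr hmem rfl rfl]
    · rw [hstep, hb γ]
      have hmem : ((Sum.inr γ : Gadget n m) ∈ insert (Sum.inl i) S ∧ kk cl T γ = 1)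
          ↔ ((Sum.inr γ : Gadget n m) ∈ S ∧ kk cl T γ = 1) := by
        simp [Finset.mem_insert]
      rw [if_congr hmem rfl rfl]
    · rw [hstep, hx i', eR_insert_var]
    · rw [hstep, hd]
  | inr γ =>
    have hg0 := clause_g_eval cl T hcl S w γ hgdT (fun h => hgd h.1) hW
    obtain ⟨hc, hb, hx, hd⟩ := hW
    by_cases hk : kk cl T γ = 1
    · -- active clause: g = -1
      rw [if_pos hk] at hg0
      have hcγ := hc γ
      rw [if_pos hgdT, if_neg (fun h => hgd h.1)] at hcγ
      have hbγ := hb γ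
      rw [if_pos hgdT, if_neg (fun h => hgd h.1)] at hbγ
      refine ⟨fun γ' => ?_, fun γ' => ?_, fun i' => ?_, ?_⟩
      · rw [sgdStep_eq, hg0, sample_snd, sample_fst_clause, clauseX_c, eta_c]
        rcases eq_or_ne γ' γ with h'|h'
        · subst h'
          rw [if_pos rfl, hcγ, if_pos hgdT, if_pos ⟨Finset.mem_insert_self _ _, hk⟩]
          ring
        · rw [if_neg h', hc γ']
          have hmem : ((Sum.inr γ' : Gadget n m) ∈ insert (Sum.inr γ) S ∧ kk cl T γ' = 1)
              ↔ ((Sum.inr γ' : Gadget n m) ∈ S ∧ kk cl T γ' = 1) := by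
            simp [Finset.mem_insert, h']
          rw [if_congr hmem rfl rfl]
          ring
      · rw [sgdStep_eq, hg0, sample_snd, sample_fst_clause, clauseX_b, eta_b]
        rcases eq_or_ne γ' γ with h'|h'
        · subst h'
          rw [if_pos rfl, hbγ, if_pos hgdT, if_pos ⟨Finset.mem_insert_self _ _, hk⟩]
          ring
        · rw [if_neg h', hb γ']
          have hmem : ((Sum.inr γ' : Gadget n m) ∈ insert (Sum.inr γ) S ∧ kk cl T γ' = 1)
              ↔ ((Sum.inr γ' : Gadget n m) ∈ S ∧ kk cl T γ' = 1) := by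
            simp [Finset.mem_insert, h']
          rw [if_congr hmem rfl rfl]
          ring
      · rw [sgdStep_eq, hg0, sample_snd, sample_fst_clause, clauseX_x, eta_x,
          hx i', eR_insert_clause cl T S i' γ hgd]
        by_cases hm : memT cl i' γ
        · have hm' : i' = (cl γ).1 ∨ i' = (cl γ).2.1 ∨ i' = (cl γ).2.2 := hm
          rw [if_pos hm', if_pos (show memT cl i' γ ∧ kk cl T γ = 1 from ⟨hm, hk⟩)]
          field_simp
          ring
        · have hm' : ¬(i' = (cl γ).1 ∨ i' = (cl γ).2.1 ∨ i' = (cl γ).2.2) := hm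
          rw [if_neg hm', if_neg (show ¬(memT cl i' γ ∧ kk cl T γ = 1) from fun h => hm h.1)]
          ring
      · rw [sgdStep_eq, hg0, sample_snd, sample_fst_clause, clauseX_d, hd]
        ring
    · -- inactive clause: g = 0
      rw [if_neg hk] at hg0
      have hstep : ∀ j, sgdStep n m cl w (Sum.inr γ) j = w j := by
        intro j; rw [sgdStep_eq, hg0]; ring
      have hmem : ∀ γ' : Fin m,
          ((Sum.inr γ' : Gadget n m) ∈ insert (Sum.inr γ) S ∧ kk cl T γ' = 1)
          ↔ ((Sum.inr γ' : Gadget n m) ∈ S ∧ kk cl T γ' = 1) := by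
        intro γ'
        rcases eq_or_ne γ' γ with rfl|h'
        · simp [hk]
        · simp [Finset.mem_insert, h']
      refine ⟨fun γ' => ?_, fun γ' => ?_, fun i' => ?_, ?_⟩
      · rw [hstep, hc γ', if_congr (hmem γ') rfl rfl]
      · rw [hstep, hb γ', if_congr (hmem γ') rfl rfl]
      · rw [hstep, hx i', eR_insert_clause cl T S i' γ hgd,
          if_neg (fun h : _ ∧ _ => hk h.2), add_zero]
      · rw [hstep, hd]

lemma final_check (hcl : ClauseDistinct n m cl) (w : SatIdx n m → ℝ) (hW : W2 cl T T w) :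
    ∀ gd ∈ T, gfun n m ((gadgetSample n m cl gd).2
      * dotN n m w (gadgetSample n m cl gd).1) = 0 := by
  intro gd hgdT
  cases gd with
  | inl i => exact var_g_eval cl T T w i hgdT hW
  | inr γ =>
    by_cases hk : kk cl T γ = 1
    · obtain ⟨h12, h13, h23⟩ := hcl γ
      obtain ⟨hc, hb, hx, hd⟩ := hW
      have hN1 := Npos n m
      have hcγ := hc γ
      rw [if_pos hgdT, if_pos ⟨hgdT, hk⟩] at hcγ
      have hbγ := hb γ
      rw [if_pos hgdT, if_pos ⟨hgdT, hk⟩] at hbγ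
      obtain ⟨ha0, ha1⟩ := degD_bounds cl T (cl γ).1
      obtain ⟨hb0, hb1⟩ := degD_bounds cl T (cl γ).2.1
      obtain ⟨hc0, hc1⟩ := degD_bounds cl T (cl γ).2.2
      obtain ⟨he0, he1⟩ := eE_bounds cl T T (cl γ).1
      obtain ⟨hf0, hf1⟩ := eE_bounds cl T T (cl γ).2.1
      obtain ⟨hg0, hg1⟩ := eE_bounds cl T T (cl γ).2.2
      obtain ⟨hq0, hq1⟩ := cterm_bounds (n := n) (m := m)
      have hs1 : ((if (Sum.inl (cl γ).1 : Gadget n m) ∈ T then (1:ℝ) else -1)) ≥ -1 := by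
        split <;> norm_num
      have hs2 : ((if (Sum.inl (cl γ).2.1 : Gadget n m) ∈ T then (1:ℝ) else -1)) ≥ -1 := by
        split <;> norm_num
      have hs3 : ((if (Sum.inl (cl γ).2.2 : Gadget n m) ∈ T then (1:ℝ) else -1)) ≥ -1 := by
        split <;> norm_num
      rw [sample_snd, one_mul, sample_fst_clause,
        dot_clauseX γ (cl γ).1 (cl γ).2.1 (cl γ).2.2 w h12 h13 h23,
        hcγ, hbγ, hx (cl γ).1, hx (cl γ).2.1, hx (cl γ).2.2]
      apply gfun_zero
      left; nlinarith
    · have := clause_g_eval cl T hcl T w γ hgdT (fun h => hk h.2) hW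
      rw [if_neg hk] at this
      exact this
end
end Stmt17
namespace Stmt17
section
variable {n m : ℕ} (cl : Fin m → Fin n × Fin n × Fin n) (T : Finset (Gadget n m))

lemma foldl_inv (P : Finset (Gadget n m) → (SatIdx n m → ℝ) → Prop)
    (hstep : ∀ S w gd, gd ∈ T → gd ∉ S → P S w → P (insert gd S) (sgdStep n m cl w gd)) :
    ∀ (l : List (Gadget n m)) (S : Finset (Gadget n m)) (w : SatIdx n m → ℝ),
      l.Nodup → (∀ g ∈ l, g ∈ T) → (∀ g ∈ l, g ∉ S) → P S w →
      P (S ∪ l.toFinset) (l.foldl (sgdStep n m cl) w) := by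
  intro l
  induction l with
  | nil => intro S w _ _ _ hP; simpa using hP
  | cons g l ih =>
    intro S w hnd hmem hout hP
    have hnd' := List.nodup_cons.mp hnd
    have h1 : P (insert g S) (sgdStep n m cl w g) :=
      hstep S w g (hmem g (List.mem_cons_self)) (hout g (List.mem_cons_self)) hP
    have h2 := ih (insert g S) (sgdStep n m cl w g) hnd'.2
      (fun g' hg' => hmem g' (List.mem_cons_of_mem g hg'))
      (fun g' hg' => by
        rw [Finset.mem_insert]
        push_neg
        exact ⟨fun he => hnd'.1 (he ▸ hg'), hout g' (List.mem_cons_of_mem g hg')⟩)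
      h1
    rw [List.foldl_cons]
    have : S ∪ (g :: l).toFinset = insert g S ∪ l.toFinset := by
      rw [List.toFinset_cons, Finset.union_insert, Finset.insert_union]
    rw [this]
    exact h2

lemma foldl_fix (w : SatIdx n m → ℝ)
    (hg : ∀ gd ∈ T, gfun n m ((gadgetSample n m cl gd).2
      * dotN n m w (gadgetSample n m cl gd).1) = 0) :
    ∀ l : List (Gadget n m), (∀ g ∈ l, g ∈ T) → l.foldl (sgdStep n m cl) w = w := by
  intro l
  induction l with
  | nil => intro _; rfl
  | cons g l ih =>
    intro hmem
    have hstep : sgdStep n m cl w g = w := by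
      funext j
      rw [sgdStep_eq, hg g (hmem g (List.mem_cons_self))]
      ring
    rw [List.foldl_cons, hstep]
    exact ih fun g' hg' => hmem g' (List.mem_cons_of_mem g hg')
end
end Stmt17
/-- In the SAT construction: for any `T ⊆ T₀` and any orders of epochs 1 and 2, every
training sample `(x, y) ∈ T` satisfies `g(y (w^{(2)})ᵀ x) = 0`; consequently, running a
third epoch on `T` in any order leaves the parameter unchanged, i.e. `w^{(3)} = w^{(2)}`,
so `w^{(2)}` is a fixpoint of the training process. -/
theorem stmt17 (n m : ℕ) (cl : Fin m → Fin n × Fin n × Fin n)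
    (hcl : ClauseDistinct n m cl)
    (T : Finset (Gadget n m)) (os : ℕ → List (Gadget n m))
    (hos : ∀ e, 1 ≤ e → List.Perm (os e) T.toList) :
    (∀ gd ∈ T,
      gfun n m ((gadgetSample n m cl gd).2 *
        dotN n m (runEpochs n m cl os 2) (gadgetSample n m cl gd).1) = 0) ∧
    runEpochs n m cl os 3 = runEpochs n m cl os 2 := by
  open Stmt17 in
  have hlist : ∀ e, 1 ≤ e → (os e).Nodup ∧ (∀ g ∈ os e, g ∈ T) ∧ (os e).toFinset = T := by
    intro e he
    refine ⟨(hos e he).symm.nodup T.nodup_toList, ?_, ?_⟩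
    · intro g hg
      exact Finset.mem_toList.mp ((hos e he).mem_iff.mp hg)
    · rw [List.toFinset_eq_of_perm _ _ (hos e he), Finset.toList_toFinset]
  obtain ⟨hnd1, hmem1, htf1⟩ := hlist 1 le_rfl
  obtain ⟨hnd2, hmem2, htf2⟩ := hlist 2 (by norm_num)
  obtain ⟨hnd3, hmem3, htf3⟩ := hlist 3 (by norm_num)
  have hrun1 : runEpochs n m cl os 1 = (os 1).foldl (sgdStep n m cl) (winit n m) := rfl
  have hrun2 : runEpochs n m cl os 2
      = (os 2).foldl (sgdStep n m cl) (runEpochs n m cl os 1) := rfl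
  have hrun3 : runEpochs n m cl os 3
      = (os 3).foldl (sgdStep n m cl) (runEpochs n m cl os 2) := rfl
  have hW1 : W1 cl T (runEpochs n m cl os 1) := by
    have := foldl_inv cl T (W1 cl) (fun S w gd _ hgd hP => step1 cl hcl S w gd hgd hP)
      (os 1) ∅ (winit n m) hnd1 hmem1 (by simp) (W1_init cl)
    rw [htf1, Finset.empty_union] at this
    rw [hrun1]
    exact this
  have hW2 : W2 cl T T (runEpochs n m cl os 2) := by
    have := foldl_inv cl T (W2 cl T)
      (fun S w gd hgdT hgd hP => step2 cl T hcl S w gd hgdT hgd hP)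
      (os 2) ∅ (runEpochs n m cl os 1) hnd2 hmem2 (by simp)
      (W1_to_W2 cl T _ hW1)
    rw [htf2, Finset.empty_union] at this
    rw [hrun2]
    exact this
  have hfin := final_check cl T hcl (runEpochs n m cl os 2) hW2
  refine ⟨hfin, ?_⟩
  rw [hrun3]
  exact foldl_fix cl T _ hfin (os 3) hmem3
end

section
/- In the SAT construction, let x_test ∈ ℝ^N be the vector with (x_test)_{c_γ} = 1 for all 1 ≤ γ ≤ m, (x_test)_dummy = (−11m + 5)/2, and all other coordinates 0. Then φ has a 1-in-3 assignment (a truth assignment under which each clause of φ contains exactly one true literal) if and only if there exists Δ ⊆ T₀ such that, for every choice of orders for epochs 1 and 2, the parameter w^{(2)} obtained after two epochs of training on T₀ ∖ Δ starting from w⁰ satisfies (w^{(2)})ᵀ x_test ≥ 0. -/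
open Classical

/-- The test input: `(x_test)_{c_γ} = 1` for all `γ`, `(x_test)_dummy = (-11m + 5)/2`,
all other coordinates `0`. -/
noncomputable def xtest (n m : ℕ) : SatIdx n m → ℝ
  | Sum.inl (Sum.inl _) => 1
  | Sum.inl (Sum.inr _) => 0
  | Sum.inr (Sum.inl _) => 0
  | Sum.inr (Sum.inr _) => (-11 * (m : ℝ) + 5) / 2
section Helpers

variable {n m : ℕ}

lemma Nr_pos : (0:ℝ) < (Nval n m : ℝ) := by
  have : 0 < Nval n m := by simp [Nval]
  exact_mod_cast this

lemma Nr_ge_one : (1:ℝ) ≤ (Nval n m : ℝ) := by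
  have : 1 ≤ Nval n m := by simp [Nval]
  exact_mod_cast this

lemma m_le_half_Nr : (m:ℝ) ≤ (Nval n m : ℝ) / 2 := by
  have : 2 * m ≤ Nval n m := by simp [Nval]; omega
  have h : (2:ℝ) * m ≤ (Nval n m : ℝ) := by exact_mod_cast this
  linarith

-- gfun evaluation lemmas
lemma gfun_neg5 {s : ℝ} (h : |s - (-5)| < 0.01) :
    gfun n m s = -(12 * (Nval n m : ℝ) / 5) := by
  unfold gfun; rw [if_pos h]

lemma gfun_half {s : ℝ} (h : |s - (-(1:ℝ)/2)| < 0.26) : gfun n m s = -1 := by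
  unfold gfun
  rw [abs_lt] at h
  rw [if_neg, if_pos]
  · rw [abs_lt]; constructor <;> linarith
  · intro hc; rw [abs_lt] at hc; linarith

lemma gfun_tiny {s : ℝ}
    (h : |s - 1| < 0.01 ∨ |s - (-1)| < 0.01 ∨ |s - 3| < 0.01 ∨ |s - (-3)| < 0.01) :
    gfun n m s = -(1 / (1000 * (Nval n m : ℝ))) := by
  unfold gfun
  rw [if_neg, if_neg, if_pos h]
  · rcases h with h|h|h|h <;> (rw [abs_lt] at h; intro hc; rw [abs_lt] at hc; linarith)
  · rcases h with h|h|h|h <;> (rw [abs_lt] at h; intro hc; rw [abs_lt] at hc; linarith)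

lemma gfun_zero {s : ℝ}
    (h : (1.4 ≤ s ∧ s ≤ 1.8) ∨ (3.4 ≤ s ∧ s ≤ 3.8) ∨ (-2.6 ≤ s ∧ s ≤ -2.2) ∨ 5 ≤ s) :
    gfun n m s = 0 := by
  have hs : s ≥ 1.4 ∨ (-2.6 ≤ s ∧ s ≤ -2.2) := by
    rcases h with h|h|h|h
    · exact Or.inl (by linarith [h.1])
    · exact Or.inl (by linarith [h.1])
    · exact Or.inr h
    · exact Or.inl (by linarith)
  unfold gfun
  rw [if_neg, if_neg, if_neg]
  · intro hc
    rcases hc with hc|hc|hc|hc <;> rw [abs_lt] at hc <;>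
      rcases h with h|h|h|h <;> first | linarith [h.1, h.2] | linarith
  · intro hc; rw [abs_lt] at hc
    rcases hs with h|h <;> first | linarith | linarith [h.1, h.2]
  · intro hc; rw [abs_lt] at hc
    rcases hs with h|h <;> first | linarith | linarith [h.1, h.2]

-- index distinctness
lemma cIdx_ne_xIdx (γ : Fin m) (i : Fin n) : cIdx n m γ ≠ xIdx n m i := by
  simp [cIdx, xIdx]
lemma cIdx_ne_bIdx (γ γ' : Fin m) : cIdx n m γ ≠ bIdx n m γ' := by simp [cIdx, bIdx]
lemma cIdx_ne_dIdx (γ : Fin m) : cIdx n m γ ≠ dIdx n m := by simp [cIdx, dIdx]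
lemma xIdx_ne_bIdx (i : Fin n) (γ : Fin m) : xIdx n m i ≠ bIdx n m γ := by
  simp [xIdx, bIdx]
lemma xIdx_ne_dIdx (i : Fin n) : xIdx n m i ≠ dIdx n m := by simp [xIdx, dIdx]
lemma bIdx_ne_dIdx (γ : Fin m) : bIdx n m γ ≠ dIdx n m := by simp [bIdx, dIdx]
lemma xIdx_inj {i i' : Fin n} (h : (xIdx n m i) = xIdx n m i') : i = i' := by
  simpa [xIdx] using h
lemma cIdx_inj {γ γ' : Fin m} (h : (cIdx n m γ) = cIdx n m γ') : γ = γ' := by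
  simpa [cIdx] using h

-- dot product lemmas
lemma dot_varX (w : SatIdx n m → ℝ) (i : Fin n) :
    dotN n m w (varX n m i) = w (xIdx n m i) * 5 := by
  unfold dotN varX
  rw [Finset.sum_eq_single (xIdx n m i)]
  · simp
  · intro b _ hb; simp [hb]
  · simp

lemma dot_clauseX (w : SatIdx n m → ℝ) (γ : Fin m) (i₁ i₂ i₃ : Fin n)
    (h12 : i₁ ≠ i₂) (h13 : i₁ ≠ i₃) (h23 : i₂ ≠ i₃) :
    dotN n m w (clauseX n m γ i₁ i₂ i₃) =
      w (cIdx n m γ) + w (xIdx n m i₁) + w (xIdx n m i₂) + w (xIdx n m i₃)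
        + w (bIdx n m γ) * (1/2) := by
  unfold dotN
  rw [← Finset.sum_subset (Finset.subset_univ
    ({cIdx n m γ, xIdx n m i₁, xIdx n m i₂, xIdx n m i₃, bIdx n m γ} :
      Finset (SatIdx n m)))]
  · rw [Finset.sum_insert, Finset.sum_insert, Finset.sum_insert, Finset.sum_insert,
      Finset.sum_singleton]
    · simp only [clauseX, cIdx, xIdx, bIdx] at *
      simp [h12, h13, h23, Sum.inl.injEq, Sum.inr.injEq, h12.symm, h13.symm, h23.symm]
      ring
    · simp [xIdx, bIdx]
    · simp only [Finset.mem_insert, Finset.mem_singleton, xIdx, bIdx, not_or,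
        Sum.inl.injEq, Sum.inr.injEq]
      exact ⟨h23, by simp⟩
    · simp only [Finset.mem_insert, Finset.mem_singleton, xIdx, bIdx, not_or,
        Sum.inl.injEq, Sum.inr.injEq]
      exact ⟨h12, h13, by simp⟩
    · simp [cIdx, xIdx, bIdx]
  · intro j _ hj
    simp only [Finset.mem_insert, Finset.mem_singleton, not_or] at hj
    obtain ⟨h1, h2, h3, h4, h5⟩ := hj
    simp [clauseX, h1, h2, h3, h4, h5]

lemma dot_xtest (w : SatIdx n m → ℝ) :
    dotN n m w (xtest n m) =
      (∑ γ : Fin m, w (cIdx n m γ)) + w (dIdx n m) * ((-11 * (m:ℝ) + 5) / 2) := by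
  unfold dotN
  rw [Fintype.sum_sum_type, Fintype.sum_sum_type, Fintype.sum_sum_type]
  simp [xtest, cIdx, dIdx]

end Helpers
section Helpers2

variable {n m : ℕ}

/-- Number of clause gadgets in `S`. -/
def Kc (n m : ℕ) (S : Finset (Gadget n m)) : ℕ :=
  (Finset.univ.filter fun γ : Fin m => Sum.inr γ ∈ S).card

lemma Kc_le (S : Finset (Gadget n m)) : Kc n m S ≤ m := by
  calc Kc n m S ≤ Finset.univ.card := Finset.card_filter_le _ _
  _ = m := by simp

lemma Kc_mono {S S' : Finset (Gadget n m)} (h : S ⊆ S') : Kc n m S ≤ Kc n m S' := by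
  apply Finset.card_le_card
  intro γ hγ
  simp only [Finset.mem_filter, Finset.mem_univ, true_and] at *
  exact h hγ

lemma Kc_insert_var (S : Finset (Gadget n m)) (i : Fin n) :
    Kc n m (insert (Sum.inl i) S) = Kc n m S := by
  unfold Kc
  congr 1
  apply Finset.filter_congr
  intro γ _
  simp

lemma Kc_insert_clause (S : Finset (Gadget n m)) {γ : Fin m} (h : Sum.inr γ ∉ S) :
    Kc n m (insert (Sum.inr γ) S) = Kc n m S + 1 := by
  unfold Kc
  have : (Finset.univ.filter fun γ' : Fin m => Sum.inr γ' ∈ insert (Sum.inr γ) S)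
      = insert γ (Finset.univ.filter fun γ' : Fin m => Sum.inr γ' ∈ S) := by
    ext γ'
    simp only [Finset.mem_filter, Finset.mem_univ, true_and, Finset.mem_insert,
      Sum.inr.injEq]
  rw [this, Finset.card_insert_of_notMem (by simp [h])]

/-- The value `±1` of `x_i` depending on membership. -/
noncomputable def chi (n m : ℕ) (S : Finset (Gadget n m)) (i : Fin n) : ℝ :=
  if Sum.inl i ∈ S then 1 else -1

lemma chi_cases (S : Finset (Gadget n m)) (i : Fin n) :
    chi n m S i = 1 ∨ chi n m S i = -1 := by
  unfold chi; split_ifs <;> simp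

lemma chi_insert_clause (S : Finset (Gadget n m)) (γ : Fin m) (i : Fin n) :
    chi n m (insert (Sum.inr γ) S) i = chi n m S i := by
  unfold chi; simp

lemma chi_insert_var_self (S : Finset (Gadget n m)) (i : Fin n) :
    chi n m (insert (Sum.inl i) S) i = 1 := by
  unfold chi; simp

lemma chi_insert_var_other (S : Finset (Gadget n m)) {i i' : Fin n} (h : i' ≠ i) :
    chi n m (insert (Sum.inl i) S) i' = chi n m S i' := by
  unfold chi; simp [h]

/-- `Sat γ`: exactly one variable of clause `γ` is kept in `T`. -/
def Sat (n m : ℕ) (cl : Fin m → Fin n × Fin n × Fin n) (T : Finset (Gadget n m))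
    (γ : Fin m) : Prop :=
  ExactlyOne ((Sum.inl (cl γ).1 : Gadget n m) ∈ T) (Sum.inl (cl γ).2.1 ∈ T)
    (Sum.inl (cl γ).2.2 ∈ T)

-- clauseX coordinate values
variable {γ γ' : Fin m} {i i₁ i₂ i₃ : Fin n}

lemma clauseX_c : clauseX n m γ i₁ i₂ i₃ (cIdx n m γ) = 1 := by simp [clauseX]

lemma clauseX_c_ne (h : γ' ≠ γ) : clauseX n m γ i₁ i₂ i₃ (cIdx n m γ') = 0 := by
  simp [clauseX, cIdx, xIdx, bIdx, h]

lemma clauseX_b : clauseX n m γ i₁ i₂ i₃ (bIdx n m γ) = 1/2 := by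
  simp [clauseX, cIdx, xIdx, bIdx]

lemma clauseX_b_ne (h : γ' ≠ γ) : clauseX n m γ i₁ i₂ i₃ (bIdx n m γ') = 0 := by
  simp [clauseX, cIdx, xIdx, bIdx, h]

lemma clauseX_x (h : i = i₁ ∨ i = i₂ ∨ i = i₃) :
    clauseX n m γ i₁ i₂ i₃ (xIdx n m i) = 1 := by
  unfold clauseX
  rw [if_neg (cIdx_ne_xIdx γ i).symm, if_pos]
  rcases h with h|h|h <;> simp [xIdx, h]

lemma clauseX_x_ne (h1 : i ≠ i₁) (h2 : i ≠ i₂) (h3 : i ≠ i₃) :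
    clauseX n m γ i₁ i₂ i₃ (xIdx n m i) = 0 := by
  simp [clauseX, cIdx, xIdx, bIdx, h1, h2, h3]

lemma clauseX_d : clauseX n m γ i₁ i₂ i₃ (dIdx n m) = 0 := by
  simp [clauseX, cIdx, xIdx, bIdx, dIdx]

-- sgdStep unfolded
variable {cl : Fin m → Fin n × Fin n × Fin n}

lemma sgdStep_var_apply (w : SatIdx n m → ℝ) (i : Fin n) (j : SatIdx n m) :
    sgdStep n m cl w (Sum.inl i) j =
      w j - eta n m j * gfun n m (w (xIdx n m i) * 5) *
        (if j = xIdx n m i then 5 else 0) := by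
  simp [sgdStep, gadgetSample, dot_varX, varX]

lemma sgdStep_var_other (w : SatIdx n m → ℝ) (i : Fin n) (j : SatIdx n m)
    (hj : j ≠ xIdx n m i) : sgdStep n m cl w (Sum.inl i) j = w j := by
  rw [sgdStep_var_apply, if_neg hj]; ring

lemma sgdStep_var_x (w : SatIdx n m → ℝ) (i : Fin n) :
    sgdStep n m cl w (Sum.inl i) (xIdx n m i) =
      w (xIdx n m i) - eta n m (xIdx n m i) * gfun n m (w (xIdx n m i) * 5) * 5 := by
  rw [sgdStep_var_apply, if_pos rfl]

lemma sgdStep_clause_apply (w : SatIdx n m → ℝ) (γ : Fin m) (j : SatIdx n m) :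
    sgdStep n m cl w (Sum.inr γ) j =
      w j - eta n m j *
        gfun n m (dotN n m w (clauseX n m γ (cl γ).1 (cl γ).2.1 (cl γ).2.2)) *
        (clauseX n m γ (cl γ).1 (cl γ).2.1 (cl γ).2.2 j) := by
  simp [sgdStep, gadgetSample]

lemma eta_c : eta n m (cIdx n m γ) = 5 := rfl
lemma eta_x : eta n m (xIdx n m i) = 1 / (6 * (Nval n m : ℝ)) := rfl
lemma eta_b : eta n m (bIdx n m γ) = 2000 * (Nval n m : ℝ) := rfl
lemma eta_d : eta n m (dIdx n m) = 1 := rfl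

end Helpers2
section Epoch1

variable {n m : ℕ}

/-- Invariant during epoch 1, `S` = set of gadgets already processed. -/
def Inv1 (n m : ℕ) (S : Finset (Gadget n m)) (w : SatIdx n m → ℝ) : Prop :=
  (∀ γ : Fin m, w (cIdx n m γ) =
      if Sum.inr γ ∈ S then 1/2 + 1/(200*(Nval n m : ℝ)) else 1/2) ∧
  (∀ γ : Fin m, w (bIdx n m γ) = if Sum.inr γ ∈ S then 0 else -1) ∧
  (∀ i : Fin n, 0 ≤ w (xIdx n m i) - chi n m S i ∧
      w (xIdx n m i) - chi n m S i ≤ (Kc n m S : ℝ) / (6000 * (Nval n m : ℝ)^2)) ∧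
  w (dIdx n m) = 1

lemma Inv1_init : Inv1 n m ∅ (winit n m) := by
  refine ⟨fun γ => ?_, fun γ => ?_, fun i => ?_, ?_⟩ <;>
    simp [winit, cIdx, bIdx, xIdx, dIdx, chi, Kc]

lemma Kc_bound (S : Finset (Gadget n m)) :
    (Kc n m S : ℝ) / (6000 * (Nval n m : ℝ)^2) ≤ 1/6000 := by
  have h1 : (Kc n m S : ℝ) ≤ (Nval n m : ℝ) := by
    have : Kc n m S ≤ Nval n m := le_trans (Kc_le S) (by simp [Nval]; omega)
    exact_mod_cast this
  have h2 : (1:ℝ) ≤ (Nval n m : ℝ) := Nr_ge_one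
  rw [div_le_div_iff₀ (by positivity) (by norm_num)]
  nlinarith

lemma Kc_succ_bound (S : Finset (Gadget n m)) :
    ((Kc n m S : ℝ) + 1) / (6000 * (Nval n m : ℝ)^2) ≤ 1/3000 := by
  have h1 : (Kc n m S : ℝ) ≤ (Nval n m : ℝ) := by
    have : Kc n m S ≤ Nval n m := le_trans (Kc_le S) (by simp [Nval]; omega)
    exact_mod_cast this
  have h2 : (1:ℝ) ≤ (Nval n m : ℝ) := Nr_ge_one
  rw [div_le_div_iff₀ (by positivity) (by norm_num)]
  nlinarith

lemma step1 {cl : Fin m → Fin n × Fin n × Fin n} (hcl : ClauseDistinct n m cl)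
    {S : Finset (Gadget n m)} {w : SatIdx n m → ℝ} (g : Gadget n m)
    (hgS : g ∉ S) (h : Inv1 n m S w) : Inv1 n m (insert g S) (sgdStep n m cl w g) := by
  obtain ⟨hc, hb, hx, hd⟩ := h
  have hN1 : (1:ℝ) ≤ (Nval n m : ℝ) := Nr_ge_one
  have hN0 : (0:ℝ) < (Nval n m : ℝ) := Nr_pos
  have hKb := Kc_bound (n := n) (m := m) S
  cases g with
  | inl i =>
    have hxi := hx i
    have hchi : chi n m S i = -1 := by unfold chi; rw [if_neg hgS]
    rw [hchi] at hxi
    have hg : gfun n m (w (xIdx n m i) * 5) = -(12 * (Nval n m : ℝ) / 5) := by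
      apply gfun_neg5
      rw [abs_lt]
      constructor <;> [linarith [hxi.1]; linarith [hxi.2, hKb]]
    refine ⟨fun γ => ?_, fun γ => ?_, fun i' => ?_, ?_⟩
    · rw [sgdStep_var_other w i _ (cIdx_ne_xIdx γ i), hc γ]
      simp
    · rw [sgdStep_var_other w i _ (xIdx_ne_bIdx i γ).symm, hb γ]
      simp
    · by_cases hi : i' = i
      · subst hi
        rw [sgdStep_var_x, hg, eta_x]
        have heq : w (xIdx n m i') - 1 / (6 * (Nval n m : ℝ)) *
            -(12 * (Nval n m : ℝ) / 5) * 5 = w (xIdx n m i') + 2 := by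
          field_simp
          ring
        rw [heq, chi_insert_var_self, Kc_insert_var]
        constructor <;> linarith [hxi.1, hxi.2]
      · rw [sgdStep_var_other w i _ (fun hh => hi (xIdx_inj hh)),
          chi_insert_var_other S hi, Kc_insert_var]
        exact hx i'
    · rw [sgdStep_var_other w i _ (xIdx_ne_dIdx i).symm]
      exact hd
  | inr γ =>
    obtain ⟨d1, d2, d3⟩ := hcl γ
    have hx1 := hx (cl γ).1
    have hx2 := hx (cl γ).2.1
    have hx3 := hx (cl γ).2.2
    have hcγ := hc γ; rw [if_neg hgS] at hcγ
    have hbγ := hb γ; rw [if_neg hgS] at hbγ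
    have hsval : dotN n m w (clauseX n m γ (cl γ).1 (cl γ).2.1 (cl γ).2.2) =
        chi n m S (cl γ).1 + chi n m S (cl γ).2.1 + chi n m S (cl γ).2.2 +
        ((w (xIdx n m (cl γ).1) - chi n m S (cl γ).1) +
         (w (xIdx n m (cl γ).2.1) - chi n m S (cl γ).2.1) +
         (w (xIdx n m (cl γ).2.2) - chi n m S (cl γ).2.2)) := by
      rw [dot_clauseX w γ _ _ _ d1 d2 d3, hcγ, hbγ]
      ring
    have hg : gfun n m (dotN n m w (clauseX n m γ (cl γ).1 (cl γ).2.1 (cl γ).2.2)) =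
        -(1 / (1000 * (Nval n m : ℝ))) := by
      apply gfun_tiny
      rcases chi_cases S (cl γ).1 with e1|e1 <;>
        rcases chi_cases S (cl γ).2.1 with e2|e2 <;>
        rcases chi_cases S (cl γ).2.2 with e3|e3 <;>
        (rw [e1, e2, e3] at hsval; rw [e1] at hx1; rw [e2] at hx2; rw [e3] at hx3) <;>
        [ exact Or.inr (Or.inr (Or.inl (by
            rw [abs_lt]; constructor <;>
              linarith [hx1.1, hx2.1, hx3.1, le_trans hx1.2 hKb, le_trans hx2.2 hKb,
                le_trans hx3.2 hKb])));
          exact Or.inl (by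
            rw [abs_lt]; constructor <;>
              linarith [hx1.1, hx2.1, hx3.1, le_trans hx1.2 hKb, le_trans hx2.2 hKb,
                le_trans hx3.2 hKb]);
          exact Or.inl (by
            rw [abs_lt]; constructor <;>
              linarith [hx1.1, hx2.1, hx3.1, le_trans hx1.2 hKb, le_trans hx2.2 hKb,
                le_trans hx3.2 hKb]);
          exact Or.inr (Or.inl (by
            rw [abs_lt]; constructor <;>
              linarith [hx1.1, hx2.1, hx3.1, le_trans hx1.2 hKb, le_trans hx2.2 hKb,
                le_trans hx3.2 hKb]));
          exact Or.inl (by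
            rw [abs_lt]; constructor <;>
              linarith [hx1.1, hx2.1, hx3.1, le_trans hx1.2 hKb, le_trans hx2.2 hKb,
                le_trans hx3.2 hKb]);
          exact Or.inr (Or.inl (by
            rw [abs_lt]; constructor <;>
              linarith [hx1.1, hx2.1, hx3.1, le_trans hx1.2 hKb, le_trans hx2.2 hKb,
                le_trans hx3.2 hKb]));
          exact Or.inr (Or.inl (by
            rw [abs_lt]; constructor <;>
              linarith [hx1.1, hx2.1, hx3.1, le_trans hx1.2 hKb, le_trans hx2.2 hKb,
                le_trans hx3.2 hKb]));
          exact Or.inr (Or.inr (Or.inr (by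
            rw [abs_lt]; constructor <;>
              linarith [hx1.1, hx2.1, hx3.1, le_trans hx1.2 hKb, le_trans hx2.2 hKb,
                le_trans hx3.2 hKb])))]
    refine ⟨fun γ' => ?_, fun γ' => ?_, fun i' => ?_, ?_⟩
    · by_cases hγ : γ' = γ
      · subst hγ
        rw [sgdStep_clause_apply, hg, clauseX_c, eta_c, hcγ]
        rw [if_pos (Finset.mem_insert_self _ _)]
        field_simp
        ring
      · rw [sgdStep_clause_apply, clauseX_c_ne hγ, mul_zero, sub_zero, hc γ']
        simp [Finset.mem_insert, hγ]
    · by_cases hγ : γ' = γ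
      · subst hγ
        rw [sgdStep_clause_apply, hg, clauseX_b, eta_b, hbγ]
        rw [if_pos (Finset.mem_insert_self _ _)]
        field_simp
        ring
      · rw [sgdStep_clause_apply, clauseX_b_ne hγ, mul_zero, sub_zero, hb γ']
        simp [Finset.mem_insert, hγ]
    · rw [chi_insert_clause, Kc_insert_clause S hgS]
      by_cases hm : i' = (cl γ).1 ∨ i' = (cl γ).2.1 ∨ i' = (cl γ).2.2
      · rw [sgdStep_clause_apply, hg, clauseX_x hm, eta_x]
        have heq : w (xIdx n m i') - 1 / (6 * (Nval n m : ℝ)) *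
            -(1 / (1000 * (Nval n m : ℝ))) * 1 =
            w (xIdx n m i') + 1 / (6000 * (Nval n m : ℝ)^2) := by
          field_simp
          ring
        rw [heq]
        have hcast : ((Kc n m S + 1 : ℕ) : ℝ) = (Kc n m S : ℝ) + 1 := by push_cast; ring
        rw [hcast]
        have hsplit : ((Kc n m S : ℝ) + 1) / (6000 * (Nval n m : ℝ)^2) =
            (Kc n m S : ℝ) / (6000 * (Nval n m : ℝ)^2) +
            1 / (6000 * (Nval n m : ℝ)^2) := by ring
        rw [hsplit]
        have h6000 : (0:ℝ) < 1 / (6000 * (Nval n m : ℝ)^2) := by positivity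
        constructor <;> linarith [(hx i').1, (hx i').2]
      · push_neg at hm
        rw [sgdStep_clause_apply, clauseX_x_ne hm.1 hm.2.1 hm.2.2, mul_zero, sub_zero]
        have hcast : ((Kc n m S + 1 : ℕ) : ℝ) = (Kc n m S : ℝ) + 1 := by push_cast; ring
        rw [hcast]
        have hmono : (Kc n m S : ℝ) / (6000 * (Nval n m : ℝ)^2) ≤
            ((Kc n m S : ℝ) + 1) / (6000 * (Nval n m : ℝ)^2) := by
          apply div_le_div_of_nonneg_right ?_ (by positivity)
          · linarith
        exact ⟨(hx i').1, le_trans (hx i').2 hmono⟩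
    · rw [sgdStep_clause_apply, clauseX_d, mul_zero, sub_zero]
      exact hd

end Epoch1
section Epoch2

variable {n m : ℕ}

/-- Invariant during epoch 2: `T` = training set, `S` = processed so far. -/
def Inv2 (n m : ℕ) (cl : Fin m → Fin n × Fin n × Fin n)
    (T S : Finset (Gadget n m)) (w : SatIdx n m → ℝ) : Prop :=
  (∀ γ : Fin m, w (cIdx n m γ) = if Sum.inr γ ∈ T then
      (if Sum.inr γ ∈ S ∧ Sat n m cl T γ then 11/2 + 1/(200*(Nval n m : ℝ))
       else 1/2 + 1/(200*(Nval n m : ℝ))) else 1/2) ∧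
  (∀ γ : Fin m, w (bIdx n m γ) = if Sum.inr γ ∈ T then
      (if Sum.inr γ ∈ S ∧ Sat n m cl T γ then 1000*(Nval n m : ℝ) else 0) else -1) ∧
  (∀ i : Fin n, 0 ≤ w (xIdx n m i) - chi n m T i ∧
      w (xIdx n m i) - chi n m T i ≤ 1/6000 + (Kc n m S : ℝ)/(6*(Nval n m : ℝ))) ∧
  w (dIdx n m) = 1

lemma KcS_div_bound (S : Finset (Gadget n m)) :
    (Kc n m S : ℝ)/(6*(Nval n m : ℝ)) ≤ 1/12 := by
  have h1 : (Kc n m S : ℝ) ≤ (m : ℝ) := by exact_mod_cast Kc_le S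
  have h2 : (m:ℝ) ≤ (Nval n m : ℝ)/2 := m_le_half_Nr
  have hN0 : (0:ℝ) < (Nval n m : ℝ) := Nr_pos
  rw [div_le_div_iff₀ (by positivity) (by norm_num)]
  nlinarith

lemma KcS_div_nonneg (S : Finset (Gadget n m)) :
    (0:ℝ) ≤ (Kc n m S : ℝ)/(6*(Nval n m : ℝ)) := by positivity

lemma Inv1_to_Inv2 {cl : Fin m → Fin n × Fin n × Fin n} {T : Finset (Gadget n m)}
    {w : SatIdx n m → ℝ} (h : Inv1 n m T w) : Inv2 n m cl T ∅ w := by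
  obtain ⟨hc, hb, hx, hd⟩ := h
  refine ⟨fun γ => ?_, fun γ => ?_, fun i => ?_, hd⟩
  · rw [hc γ]
    exact if_congr Iff.rfl (by rw [if_neg (by simp)]) rfl
  · rw [hb γ]
    exact if_congr Iff.rfl (by rw [if_neg (by simp)]) rfl
  · refine ⟨(hx i).1, le_trans (hx i).2 ?_⟩
    have h1 := Kc_bound (n := n) (m := m) T
    have h2 := KcS_div_nonneg (n := n) (m := m) (∅ : Finset (Gadget n m))
    linarith

lemma bound_mono2 {S S' : Finset (Gadget n m)} (h : S ⊆ S') :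
    1/6000 + (Kc n m S : ℝ)/(6*(Nval n m : ℝ)) ≤
    1/6000 + (Kc n m S' : ℝ)/(6*(Nval n m : ℝ)) := by
  have hc : (Kc n m S : ℝ) ≤ (Kc n m S' : ℝ) := by exact_mod_cast Kc_mono h
  have hN0 : (0:ℝ) < (Nval n m : ℝ) := Nr_pos
  gcongr

lemma inv200 {x : ℝ} (h : 1 ≤ x) : 1/(200*x) ≤ 1/200 := by
  rw [div_le_div_iff₀ (by linarith) (by norm_num)]
  linarith

lemma step2 {cl : Fin m → Fin n × Fin n × Fin n} (hcl : ClauseDistinct n m cl)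
    {T S : Finset (Gadget n m)} {w : SatIdx n m → ℝ} (g : Gadget n m)
    (hgT : g ∈ T) (hgS : g ∉ S) (h : Inv2 n m cl T S w) :
    Inv2 n m cl T (insert g S) (sgdStep n m cl w g) := by
  obtain ⟨hc, hb, hx, hd⟩ := h
  have hN1 : (1:ℝ) ≤ (Nval n m : ℝ) := Nr_ge_one
  have hN0 : (0:ℝ) < (Nval n m : ℝ) := Nr_pos
  have hKd := KcS_div_bound (n := n) (m := m) S
  have hKn := KcS_div_nonneg (n := n) (m := m) S
  have h200 : 1/(200*(Nval n m : ℝ)) ≤ 1/200 := inv200 hN1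
  have h200p : (0:ℝ) < 1/(200*(Nval n m : ℝ)) := by positivity
  cases g with
  | inl i =>
    have hxi := hx i
    have hchi : chi n m T i = 1 := by unfold chi; rw [if_pos hgT]
    rw [hchi] at hxi
    have hg : gfun n m (w (xIdx n m i) * 5) = 0 := by
      apply gfun_zero
      exact Or.inr (Or.inr (Or.inr (by linarith [hxi.1])))
    have hstep : sgdStep n m cl w (Sum.inl i) = w := by
      funext j
      rw [sgdStep_var_apply, hg]
      ring
    rw [hstep]
    refine ⟨fun γ => ?_, fun γ => ?_, fun i' => ?_, hd⟩
    · rw [hc γ]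
      exact if_congr Iff.rfl (if_congr (by simp) rfl rfl) rfl
    · rw [hb γ]
      exact if_congr Iff.rfl (if_congr (by simp) rfl rfl) rfl
    · rw [Kc_insert_var]
      exact hx i'
  | inr γ =>
    obtain ⟨d1, d2, d3⟩ := hcl γ
    have hx1 := hx (cl γ).1
    have hx2 := hx (cl γ).2.1
    have hx3 := hx (cl γ).2.2
    have hcγ : w (cIdx n m γ) = 1/2 + 1/(200*(Nval n m : ℝ)) := by
      rw [hc γ, if_pos hgT, if_neg (fun hh => hgS hh.1)]
    have hbγ : w (bIdx n m γ) = 0 := by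
      rw [hb γ, if_pos hgT, if_neg (fun hh => hgS hh.1)]
    have hsval : dotN n m w (clauseX n m γ (cl γ).1 (cl γ).2.1 (cl γ).2.2) =
        1/2 + 1/(200*(Nval n m : ℝ)) +
        (chi n m T (cl γ).1 + chi n m T (cl γ).2.1 + chi n m T (cl γ).2.2) +
        ((w (xIdx n m (cl γ).1) - chi n m T (cl γ).1) +
         (w (xIdx n m (cl γ).2.1) - chi n m T (cl γ).2.1) +
         (w (xIdx n m (cl γ).2.2) - chi n m T (cl γ).2.2)) := by
      rw [dot_clauseX w γ _ _ _ d1 d2 d3, hcγ, hbγ]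
      ring
    have hu1 : w (xIdx n m (cl γ).1) - chi n m T (cl γ).1 ≤ 1/6000 + 1/12 := by
      linarith [hx1.2]
    have hu2 : w (xIdx n m (cl γ).2.1) - chi n m T (cl γ).2.1 ≤ 1/6000 + 1/12 := by
      linarith [hx2.2]
    have hu3 : w (xIdx n m (cl γ).2.2) - chi n m T (cl γ).2.2 ≤ 1/6000 + 1/12 := by
      linarith [hx3.2]
    by_cases hsat : Sat n m cl T γ
    · -- satisfied clause: big update
      have hchisum : chi n m T (cl γ).1 + chi n m T (cl γ).2.1 +
          chi n m T (cl γ).2.2 = -1 := by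
        rcases hsat with ⟨h1, h2, h3⟩ | ⟨h1, h2, h3⟩ | ⟨h1, h2, h3⟩ <;>
          simp [chi, h1, h2, h3] <;> norm_num
      have hg : gfun n m (dotN n m w (clauseX n m γ (cl γ).1 (cl γ).2.1 (cl γ).2.2))
          = -1 := by
        apply gfun_half
        rw [hsval, hchisum, abs_lt]
        constructor <;> linarith [hx1.1, hx2.1, hx3.1]
      refine ⟨fun γ' => ?_, fun γ' => ?_, fun i' => ?_, ?_⟩
      · by_cases hγ : γ' = γ
        · subst hγ
          rw [sgdStep_clause_apply, hg, clauseX_c, eta_c, hcγ, if_pos hgT,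
            if_pos ⟨Finset.mem_insert_self _ _, hsat⟩]
          ring
        · rw [sgdStep_clause_apply, clauseX_c_ne hγ, mul_zero, sub_zero, hc γ']
          exact if_congr Iff.rfl (if_congr (by simp [hγ]) rfl rfl) rfl
      · by_cases hγ : γ' = γ
        · subst hγ
          rw [sgdStep_clause_apply, hg, clauseX_b, eta_b, hbγ, if_pos hgT,
            if_pos ⟨Finset.mem_insert_self _ _, hsat⟩]
          ring
        · rw [sgdStep_clause_apply, clauseX_b_ne hγ, mul_zero, sub_zero, hb γ']
          exact if_congr Iff.rfl (if_congr (by simp [hγ]) rfl rfl) rfl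
      · rw [Kc_insert_clause S hgS]
        have hcast : ((Kc n m S + 1 : ℕ) : ℝ) = (Kc n m S : ℝ) + 1 := by
          push_cast; ring
        rw [hcast]
        have hsplit : ((Kc n m S : ℝ) + 1) / (6*(Nval n m : ℝ)) =
            (Kc n m S : ℝ) / (6*(Nval n m : ℝ)) + 1/(6*(Nval n m : ℝ)) := by
          ring
        rw [hsplit]
        have h6p : (0:ℝ) < 1/(6*(Nval n m : ℝ)) := by positivity
        by_cases hm : i' = (cl γ).1 ∨ i' = (cl γ).2.1 ∨ i' = (cl γ).2.2
        · rw [sgdStep_clause_apply, hg, clauseX_x hm, eta_x]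
          have heq : w (xIdx n m i') - 1 / (6 * (Nval n m : ℝ)) * (-1) * 1 =
              w (xIdx n m i') + 1/(6*(Nval n m : ℝ)) := by ring
          rw [heq]
          constructor <;> linarith [(hx i').1, (hx i').2]
        · push_neg at hm
          rw [sgdStep_clause_apply, clauseX_x_ne hm.1 hm.2.1 hm.2.2, mul_zero,
            sub_zero]
          constructor <;> linarith [(hx i').1, (hx i').2]
      · rw [sgdStep_clause_apply, clauseX_d, mul_zero, sub_zero]
        exact hd
    · -- unsatisfied clause: no update
      have hcs : chi n m T (cl γ).1 + chi n m T (cl γ).2.1 + chi n m T (cl γ).2.2 = 1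
          ∨ chi n m T (cl γ).1 + chi n m T (cl γ).2.1 + chi n m T (cl γ).2.2 = 3
          ∨ chi n m T (cl γ).1 + chi n m T (cl γ).2.1 + chi n m T (cl γ).2.2 = -3 := by
        by_cases m1 : (Sum.inl (cl γ).1 : Gadget n m) ∈ T <;>
          by_cases m2 : (Sum.inl (cl γ).2.1 : Gadget n m) ∈ T <;>
          by_cases m3 : (Sum.inl (cl γ).2.2 : Gadget n m) ∈ T
        · exact Or.inr (Or.inl (by norm_num [chi, m1, m2, m3]))
        · exact Or.inl (by norm_num [chi, m1, m2, m3])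
        · exact Or.inl (by norm_num [chi, m1, m2, m3])
        · exact absurd (Or.inl ⟨m1, m2, m3⟩) hsat
        · exact Or.inl (by norm_num [chi, m1, m2, m3])
        · exact absurd (Or.inr (Or.inl ⟨m1, m2, m3⟩)) hsat
        · exact absurd (Or.inr (Or.inr ⟨m1, m2, m3⟩)) hsat
        · exact Or.inr (Or.inr (by norm_num [chi, m1, m2, m3]))
      have hg : gfun n m (dotN n m w (clauseX n m γ (cl γ).1 (cl γ).2.1 (cl γ).2.2))
          = 0 := by
        apply gfun_zero
        rcases hcs with hk | hk | hk <;> rw [hsval, hk]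
        · exact Or.inl ⟨by linarith [hx1.1, hx2.1, hx3.1], by linarith⟩
        · exact Or.inr (Or.inl ⟨by linarith [hx1.1, hx2.1, hx3.1], by linarith⟩)
        · exact Or.inr (Or.inr (Or.inl
            ⟨by linarith [hx1.1, hx2.1, hx3.1], by linarith⟩))
      have hstep : sgdStep n m cl w (Sum.inr γ) = w := by
        funext j
        rw [sgdStep_clause_apply, hg]
        ring
      rw [hstep]
      refine ⟨fun γ' => ?_, fun γ' => ?_, fun i' => ?_, hd⟩
      · rw [hc γ']
        refine if_congr Iff.rfl (if_congr ?_ rfl rfl) rfl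
        by_cases hγ : γ' = γ
        · subst hγ
          constructor <;> (rintro ⟨_, hst⟩; exact absurd hst hsat)
        · simp [hγ]
      · rw [hb γ']
        refine if_congr Iff.rfl (if_congr ?_ rfl rfl) rfl
        by_cases hγ : γ' = γ
        · subst hγ
          constructor <;> (rintro ⟨_, hst⟩; exact absurd hst hsat)
        · simp [hγ]
      · exact ⟨(hx i').1, le_trans (hx i').2
          (bound_mono2 (Finset.subset_insert _ _))⟩

end Epoch2
section Final

variable {n m : ℕ}

lemma ExactlyOne_congr {P Q R P' Q' R' : Prop} (h1 : P ↔ P') (h2 : Q ↔ Q')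
    (h3 : R ↔ R') : ExactlyOne P Q R ↔ ExactlyOne P' Q' R' := by
  unfold ExactlyOne; tauto

lemma foldl_inv {cl : Fin m → Fin n × Fin n × Fin n}
    (P : Finset (Gadget n m) → (SatIdx n m → ℝ) → Prop) (T : Finset (Gadget n m))
    (step : ∀ S w g, g ∈ T → g ∉ S → P S w → P (insert g S) (sgdStep n m cl w g)) :
    ∀ (l : List (Gadget n m)) (S : Finset (Gadget n m)) (w : SatIdx n m → ℝ),
      l.Nodup → (∀ g ∈ l, g ∈ T) → (∀ g ∈ l, g ∉ S) →
      P S w → P (S ∪ l.toFinset) (l.foldl (sgdStep n m cl) w) := by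
  intro l
  induction l with
  | nil => intro S w _ _ _ h; simpa using h
  | cons g l ih =>
    intro S w hnd hT hS h
    rw [List.foldl_cons]
    have h1 : P (insert g S) (sgdStep n m cl w g) :=
      step S w g (hT g (List.mem_cons_self)) (hS g (List.mem_cons_self)) h
    have h2 := ih (insert g S) (sgdStep n m cl w g) (List.nodup_cons.mp hnd).2
      (fun g' hg' => hT g' (List.mem_cons_of_mem _ hg'))
      (fun g' hg' => by
        simp only [Finset.mem_insert, not_or]
        exact ⟨fun he => (List.nodup_cons.mp hnd).1 (he ▸ hg'),
          hS g' (List.mem_cons_of_mem _ hg')⟩)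
      h1
    have hset : insert g S ∪ l.toFinset = S ∪ (g :: l).toFinset := by
      ext a
      simp only [Finset.mem_union, Finset.mem_insert, List.toFinset_cons,
        List.mem_toFinset]
      tauto
    rwa [hset] at h2

lemma run_inv {cl : Fin m → Fin n × Fin n × Fin n}
    (P : Finset (Gadget n m) → (SatIdx n m → ℝ) → Prop) (T : Finset (Gadget n m))
    (step : ∀ S w g, g ∈ T → g ∉ S → P S w → P (insert g S) (sgdStep n m cl w g))
    {l : List (Gadget n m)} (hperm : l.Perm T.toList) {w : SatIdx n m → ℝ}
    (h : P ∅ w) : P T (l.foldl (sgdStep n m cl) w) := by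
  have hnd : l.Nodup := hperm.nodup_iff.mpr (Finset.nodup_toList T)
  have hmem : ∀ g ∈ l, g ∈ T := fun g hg =>
    Finset.mem_toList.mp (hperm.subset hg)
  have hfin : l.toFinset = T := by
    ext a
    rw [List.mem_toFinset, hperm.mem_iff, Finset.mem_toList]
  have := foldl_inv P T step l ∅ w hnd hmem (by simp) h
  rwa [Finset.empty_union, hfin] at this

lemma run_two {cl : Fin m → Fin n × Fin n × Fin n} (hcl : ClauseDistinct n m cl)
    (T : Finset (Gadget n m)) (os : ℕ → List (Gadget n m))
    (h1 : (os 1).Perm T.toList) (h2 : (os 2).Perm T.toList) :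
    Inv2 n m cl T T (runEpochs n m cl os 2) := by
  have e1 : Inv1 n m T (runEpochs n m cl os 1) := by
    have : runEpochs n m cl os 1 = (os 1).foldl (sgdStep n m cl) (winit n m) := rfl
    rw [this]
    exact run_inv (Inv1 n m) T (fun S w g _ hgS h => step1 hcl g hgS h) h1 Inv1_init
  have : runEpochs n m cl os 2 =
      (os 2).foldl (sgdStep n m cl) (runEpochs n m cl os 1) := rfl
  rw [this]
  exact run_inv (Inv2 n m cl T) T (fun S w g hgT hgS h => step2 hcl g hgT hgS h) h2
    (Inv1_to_Inv2 e1)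

end Final
/-- In the SAT construction: `φ` has a 1-in-3 assignment (a truth assignment under which
each clause contains exactly one true literal) if and only if there exists `Δ ⊆ T₀` such
that for every choice of orders of the epochs, the parameter `w^{(2)}` obtained after two
epochs of training on `T₀ \ Δ` starting from `w⁰` satisfies `(w^{(2)})ᵀ x_test ≥ 0`. -/
theorem stmt18 (n m : ℕ) (cl : Fin m → Fin n × Fin n × Fin n)
    (hcl : ClauseDistinct n m cl) :
    (∃ ν : Fin n → Prop, ∀ γ : Fin m,
      ExactlyOne (ν (cl γ).1) (ν (cl γ).2.1) (ν (cl γ).2.2)) ↔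
    (∃ Δ : Finset (Gadget n m), ∀ os : ℕ → List (Gadget n m),
      (∀ e, 1 ≤ e → List.Perm (os e) ((Finset.univ \ Δ).toList)) →
      0 ≤ dotN n m (runEpochs n m cl os 2) (xtest n m)) := by
  have hN0 : (0:ℝ) < (Nval n m : ℝ) := Nr_pos
  have hN1 : (1:ℝ) ≤ (Nval n m : ℝ) := Nr_ge_one
  have hcp : (0:ℝ) < 1/(200*(Nval n m : ℝ)) := by positivity
  constructor
  · rintro ⟨ν, hν⟩
    refine ⟨Finset.univ.filter (fun g => Sum.elim (fun i => ¬ ν i) (fun _ => False) g),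
      fun os hos => ?_⟩
    set T : Finset (Gadget n m) :=
      Finset.univ \ Finset.univ.filter
        (fun g => Sum.elim (fun i => ¬ ν i) (fun _ => False) g) with hT
    have hTc : ∀ γ : Fin m, (Sum.inr γ : Gadget n m) ∈ T := by
      intro γ; simp [hT]
    have hTv : ∀ i : Fin n, ((Sum.inl i : Gadget n m) ∈ T) ↔ ν i := by
      intro i; simp [hT, not_not]
    have hsat : ∀ γ, Sat n m cl T γ := fun γ =>
      (ExactlyOne_congr (hTv _) (hTv _) (hTv _)).mpr (hν γ)
    have h2 := run_two hcl T os (hos 1 (le_refl 1)) (hos 2 (by norm_num))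
    obtain ⟨hc, _, _, hd⟩ := h2
    rw [dot_xtest, hd]
    have hsum : ∑ γ : Fin m, (runEpochs n m cl os 2) (cIdx n m γ) =
        (m:ℝ) * (11/2 + 1/(200*(Nval n m : ℝ))) := by
      rw [Finset.sum_congr rfl
        (fun γ _ => by rw [hc γ, if_pos (hTc γ), if_pos ⟨hTc γ, hsat γ⟩])]
      rw [Finset.sum_const, Finset.card_univ, Fintype.card_fin, nsmul_eq_mul]
    rw [hsum]
    have hm0 : (0:ℝ) ≤ (m:ℝ) := Nat.cast_nonneg m
    nlinarith [mul_nonneg hm0 (le_of_lt hcp)]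
  · rintro ⟨Δ, hΔ⟩
    set T : Finset (Gadget n m) := Finset.univ \ Δ with hT
    have h0 := hΔ (fun _ => T.toList) (fun e _ => List.Perm.refl _)
    have h2 := run_two hcl T (fun _ => T.toList) (List.Perm.refl _) (List.Perm.refl _)
    set w2 := runEpochs n m cl (fun _ => T.toList) 2 with hw2
    obtain ⟨hc, _, _, hd⟩ := h2
    rw [dot_xtest, hd] at h0
    have key : ∀ γ : Fin m, (Sum.inr γ : Gadget n m) ∈ T ∧ Sat n m cl T γ := by
      by_contra hbad
      rw [not_forall] at hbad
      obtain ⟨γ₀, hγ₀⟩ := hbad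
      have hm1 : 1 ≤ m := by have := γ₀.is_lt; omega
      have hub0 : w2 (cIdx n m γ₀) ≤ 1/2 + 1/(200*(Nval n m : ℝ)) := by
        rw [hc γ₀]
        by_cases ht : (Sum.inr γ₀ : Gadget n m) ∈ T
        · rw [if_pos ht, if_neg (fun hh => hγ₀ ⟨ht, hh.2⟩)]
        · rw [if_neg ht]; linarith
      have hsum : ∑ γ : Fin m, w2 (cIdx n m γ) ≤
          (m:ℝ) * (11/2 + 1/(200*(Nval n m : ℝ))) - 5 := by
        calc ∑ γ : Fin m, w2 (cIdx n m γ)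
            ≤ ∑ γ : Fin m, ((11/2 + 1/(200*(Nval n m : ℝ))) +
              (if γ = γ₀ then (-5:ℝ) else 0)) := by
              apply Finset.sum_le_sum
              intro γ _
              by_cases hγ : γ = γ₀
              · subst hγ
                rw [if_pos rfl]
                linarith
              · rw [if_neg hγ, add_zero, hc γ]
                split_ifs <;> linarith
          _ = (m:ℝ) * (11/2 + 1/(200*(Nval n m : ℝ))) - 5 := by
              rw [Finset.sum_add_distrib, Finset.sum_const, Finset.card_univ,
                Fintype.card_fin, nsmul_eq_mul,
                Finset.sum_ite_eq' Finset.univ γ₀ (fun _ => (-5:ℝ))]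
              simp
              ring
      have hmc : (m:ℝ) * (1/(200*(Nval n m : ℝ))) ≤ 1/400 := by
        have hm2 : (m:ℝ) ≤ (Nval n m : ℝ)/2 := m_le_half_Nr
        rw [mul_one_div, div_le_div_iff₀ (by positivity) (by norm_num)]
        linarith
      nlinarith [h0, hsum, hmc]
    exact ⟨fun i => (Sum.inl i : Gadget n m) ∈ T, fun γ => (key γ).2⟩
end
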